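/- arXiv:1104.1027 — 7 statements merged into one kernel-verified Lean document; each statement's English description precedes it below -/
import Mathlib

section
/- Suppose the sequence (x_n) satisfies the recursion x_n = Σ_{j=1}^{n-1} w_{n,j} x_{n-j} + r_n with w_{n,j} = a_j + b_j/n + c_{n,j} ≥ 0, conditions (r1)–(r3) hold, and (x_n) has infinitely many positive terms. Then there exists N such that x_n > 0 for every n ≥ N. -/
/-!
The solution is nonnegative, and the recursion gives `x (m + j) ≥ w (m + j) j * x m`. For each
`j` with `a j > 0` the weight `w n j` tends to `a j`, so for large `m` positivity of `x m`
propagates to `x (m + j)`. Since the support of `a` has gcd one, a finite part of it already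
generates every large integer as a sum, so positivity propagates from one large positive term to
all later ones.
-/

open Filter Topology

namespace Nat

theorem add_mem_of_mem_addSubmonoidClosure {P : ℕ → Prop} {t : Set ℕ} {N : ℕ}
    (hP : ∀ m ≥ N, P m → ∀ j ∈ t, P (m + j)) {k : ℕ} (hk : k ∈ AddSubmonoid.closure t) :
    ∀ m ≥ N, P m → P (m + k) := by
  induction hk using AddSubmonoid.closure_induction with
  | mem j hj => exact fun m hm hPm => hP m hm hPm j hj
  | zero => exact fun m _ hPm => hPm
  | add k₁ k₂ _ _ ih₁ ih₂ =>
    intro m hm hPm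
    rw [← add_assoc]
    exact ih₂ (m + k₁) (by omega) (ih₁ m hm hPm)

theorem eventually_of_frequently_of_setGcd_eq_one {s : Set ℕ} (hs : setGcd s = 1)
    {P : ℕ → Prop} (hP : ∀ j ∈ s, ∀ᶠ m in atTop, P m → P (m + j))
    (hfreq : ∃ᶠ m in atTop, P m) : ∀ᶠ m in atTop, P m := by
  obtain ⟨t, n₀, hts, hspan⟩ := exists_mem_span_nat_finset_of_ge s
  obtain ⟨N, hN⟩ := eventually_atTop.mp <|
    (Finset.eventually_all t).mpr fun j hj => hP j (hts hj)
  obtain ⟨m, hm, hPm⟩ := frequently_atTop.mp hfreq N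
  refine eventually_atTop.mpr ⟨m + n₀, fun n hn => ?_⟩
  have hclosure : n - m ∈ AddSubmonoid.closure (t : Set ℕ) := by
    rw [← Submodule.span_nat_eq_addSubmonoidClosure]
    exact hspan (n - m) (by omega) (hs ▸ one_dvd _)
  have := add_mem_of_mem_addSubmonoidClosure (fun m hm hPm j hj => hN m hm j hj hPm)
    hclosure m hm hPm
  rwa [Nat.add_sub_cancel' (by omega)] at this

end Nat

section Renewal

variable {w : ℕ → ℕ → ℝ} {x r : ℕ → ℝ}
  (hwnn : ∀ n : ℕ, ∀ j ∈ Finset.Ico 1 n, 0 ≤ w n j)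
  (hrec : ∀ n : ℕ, 1 ≤ n → x n = (∑ j ∈ Finset.Ico 1 n, w n j * x (n - j)) + r n)
  (hr_nn : ∀ n : ℕ, 0 ≤ r n)
include hwnn hrec hr_nn

theorem renewal_nonneg {n : ℕ} (hn : 1 ≤ n) : 0 ≤ x n := by
  induction n using Nat.strong_induction_on with
  | _ n ih =>
    rw [hrec n hn]
    have hsum : 0 ≤ ∑ j ∈ Finset.Ico 1 n, w n j * x (n - j) :=
      Finset.sum_nonneg fun j hj =>
        have hj' := Finset.mem_Ico.mp hj
        mul_nonneg (hwnn n j hj) (ih (n - j) (by omega) (by omega))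
    linarith [hr_nn n]

theorem renewal_weight_mul_le {m j : ℕ} (hm : 1 ≤ m) (hj : 1 ≤ j) :
    w (m + j) j * x m ≤ x (m + j) := by
  have hterm : w (m + j) j * x (m + j - j) ≤
      ∑ i ∈ Finset.Ico 1 (m + j), w (m + j) i * x (m + j - i) := by
    refine Finset.single_le_sum (f := fun i => w (m + j) i * x (m + j - i)) (fun i hi => ?_)
      (Finset.mem_Ico.mpr ⟨hj, by omega⟩)
    have hi' := Finset.mem_Ico.mp hi
    exact mul_nonneg (hwnn _ i hi) (renewal_nonneg hwnn hrec hr_nn (by omega))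
  rw [Nat.add_sub_cancel] at hterm
  linarith [hrec (m + j) (by omega), hr_nn (m + j)]

end Renewal

theorem tendsto_atTop_zero_of_summable_weighted_row_sum {c : ℕ → ℕ → ℝ} {z : ℝ} (hz : 0 < z)
    (hcz : Summable fun n : ℕ => ∑ j ∈ Finset.Ico 1 n, |c n j| * z ^ j) {j : ℕ} (hj : 1 ≤ j) :
    Tendsto (fun n => c n j) atTop (𝓝 0) := by
  have hzj : 0 < z ^ j := pow_pos hz j
  refine squeeze_zero_norm' (a := fun n => (∑ i ∈ Finset.Ico 1 n, |c n i| * z ^ i) / z ^ j) ?_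
    (by simpa using hcz.tendsto_atTop_zero.div_const (z ^ j))
  filter_upwards [eventually_gt_atTop j] with n hn
  rw [Real.norm_eq_abs, le_div_iff₀ hzj]
  exact Finset.single_le_sum (f := fun i => |c n i| * z ^ i) (fun i _ => by positivity)
    (Finset.mem_Ico.mpr ⟨hj, hn⟩)

theorem discrete_renewal_eventually_positive_general
    (a b r : ℕ → ℝ) (c : ℕ → ℕ → ℝ) (x : ℕ → ℝ) (w : ℕ → ℕ → ℝ)
    (hw : ∀ n j : ℕ, w n j = a j + b j / (n : ℝ) + c n j)
    (hwnn : ∀ n : ℕ, ∀ j ∈ Finset.Ico 1 n, 0 ≤ w n j)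
    (hrec : ∀ n : ℕ, 1 ≤ n → x n = (∑ j ∈ Finset.Ico 1 n, w n j * x (n - j)) + r n)
    -- (r1)
    (hgcd : ∀ d : ℕ, (∀ n : ℕ, 1 ≤ n → 0 < a n → d ∣ n) → d = 1)
    -- (r2)
    (hr_nn : ∀ n : ℕ, 0 ≤ r n)
    -- (r3)
    (z : ℝ) (hz : 0 < z)
    (hcz : Summable fun n : ℕ => ∑ j ∈ Finset.Ico 1 n, |c n j| * z ^ j)
    -- infinitely many positive terms
    (hx_inf : ∀ N : ℕ, ∃ n : ℕ, N ≤ n ∧ 0 < x n) :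
    ∃ N : ℕ, ∀ n : ℕ, N ≤ n → 0 < x n := by
  set s : Set ℕ := {j | 1 ≤ j ∧ 0 < a j}
  have hs : Nat.setGcd s = 1 :=
    hgcd _ fun n hn ha => Nat.setGcd_dvd_of_mem (s := s) ⟨hn, ha⟩
  have hweight : ∀ j ∈ s, ∀ᶠ n in atTop, 0 < w n j := by
    rintro j ⟨hj, haj⟩
    have hlim : Tendsto (fun n : ℕ => w n j) atTop (𝓝 (a j)) := by
      simpa [hw] using ((tendsto_const_div_atTop_nhds_zero_nat (b j)).const_add (a j)).add
        (tendsto_atTop_zero_of_summable_weighted_row_sum hz hcz hj)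
    exact hlim.eventually_const_lt haj
  have hpropagate : ∀ j ∈ s, ∀ᶠ m in atTop, 0 < x m → 0 < x (m + j) := fun j hj => by
    filter_upwards [eventually_ge_atTop 1, tendsto_add_atTop_nat j |>.eventually (hweight j hj)]
      with m hm hwpos hxm
    exact (mul_pos hwpos hxm).trans_le (renewal_weight_mul_le hwnn hrec hr_nn hm hj.1)
  exact eventually_atTop.mp <|
    Nat.eventually_of_frequently_of_setGcd_eq_one hs hpropagate (frequently_atTop.mpr hx_inf)

/-- Lemma 3.1 of the paper: under conditions (r1)–(r3), if the solution of the
renewal-like recursion has infinitely many positive terms, then it is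
eventually positive. -/
theorem discrete_renewal_eventually_positive
    (a b r : ℕ → ℝ) (c : ℕ → ℕ → ℝ) (x : ℕ → ℝ) (w : ℕ → ℕ → ℝ)
    (hw : ∀ n j : ℕ, w n j = a j + b j / (n : ℝ) + c n j)
    (hwnn : ∀ n : ℕ, ∀ j ∈ Finset.Ico 1 n, 0 ≤ w n j)
    (hrec : ∀ n : ℕ, 1 ≤ n → x n = (∑ j ∈ Finset.Ico 1 n, w n j * x (n - j)) + r n)
    -- (r1)
    (ha_nn : ∀ n : ℕ, 1 ≤ n → 0 ≤ a n)
    (hgcd : ∀ d : ℕ, (∀ n : ℕ, 1 ≤ n → 0 < a n → d ∣ n) → d = 1)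
    -- (r2)
    (hr_nn : ∀ n : ℕ, 0 ≤ r n)
    (hr_pos : ∃ n : ℕ, 0 < r n)
    -- (r3)
    (z : ℝ) (hz : 0 < z)
    (haz : Summable fun n : ℕ => a (n + 1) * z ^ (n + 1))
    (haz1 : 1 < ∑' n : ℕ, a (n + 1) * z ^ (n + 1))
    (hbz : Summable fun n : ℕ => |b (n + 1)| * z ^ (n + 1))
    (hcz : Summable fun n : ℕ => ∑ j ∈ Finset.Ico 1 n, |c n j| * z ^ j)
    (hrz : Summable fun n : ℕ => r (n + 1) * z ^ (n + 1))
    -- infinitely many positive terms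
    (hx_inf : ∀ N : ℕ, ∃ n : ℕ, N ≤ n ∧ 0 < x n) :
    ∃ N : ℕ, ∀ n : ℕ, N ≤ n → 0 < x n :=
  discrete_renewal_eventually_positive_general a b r c x w hw hwnn hrec hgcd hr_nn z hz hcz hx_inf
end

section
/- Assume the normalized conditions: (r1)–(r3) hold with Σ_{n=1}^∞ a_n = 1 and z > 1, and set γ = (Σ_{n=1}^∞ b_n)/(Σ_{n=1}^∞ n a_n). Then for every positive integer k, Σ_{n=k}^∞ | Σ_{j=1}^{n-k} ( w_{n,j} (1 − j/n)^γ − a_j ) | < ∞, where w_{n,j} = a_j + b_j/n + c_{n,j}. -/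
/-!
Write `x = 1 - j/n`. The summand splits as
`a_j (x^γ - 1 + γ j/n) + (b_j/n) (x^γ - 1) + c_{n,j} x^γ + (b_j - γ j a_j)/n`.
Since `x⁻¹ ≤ j + 1`, expanding `x^γ = exp (γ log x)` to second order bounds the first two
pieces by a polynomial in `j` times `1/n²` and the third by a polynomial in `j` times `|c_{n,j}|`;
the exponential moments `∑ |a_j| z^j`, `∑ |b_j| z^j` and `∑_n ∑_j |c_{n,j}| z^j` absorb the
polynomials. The choice of `γ` makes `∑_j (b_j - γ j a_j) = 0`, so the partial sum of the last
piece up to `n - k` is minus a tail, which is `O(1/(n - k + 1))` because `∑_j j |b_j - γ j a_j|`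
converges; after division by `n` this is again `O(1/n²)`.
-/

open Finset

namespace Real

theorem exp_sub_one_sub_le_sq_mul_max (t : ℝ) : exp t - 1 - t ≤ t ^ 2 * max 1 (exp t) := by
  have h1 : (1 - t) * exp t ≤ 1 := by
    have := add_one_le_exp (-t)
    calc (1 - t) * exp t ≤ exp (-t) * exp t := by gcongr; linarith
      _ = 1 := by rw [← exp_add, neg_add_cancel, exp_zero]
  -- hence `exp t - 1 - t ≤ t (exp t - 1)`, and `|exp t - 1| ≤ |t| max 1 (exp t)`
  rcases le_total 0 t with ht | ht
  · nlinarith [le_max_right 1 (exp t)]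
  · nlinarith [le_max_left 1 (exp t), add_one_le_exp t]

theorem abs_log_sub_sub_one_le {x : ℝ} (hx : 0 < x) : |log x - (x - 1)| ≤ (1 - x) ^ 2 * x⁻¹ := by
  have hx' : x * x⁻¹ = 1 := mul_inv_cancel₀ hx.ne'
  rw [abs_sub_comm, abs_of_nonneg (by linarith [log_le_sub_one_of_pos hx])]
  nlinarith [one_sub_inv_le_log_of_pos hx]

theorem abs_log_le_one_sub_mul_inv {x : ℝ} (hx : 0 < x) (hx1 : x ≤ 1) : |log x| ≤ (1 - x) * x⁻¹ := by
  have hx' : x * x⁻¹ = 1 := mul_inv_cancel₀ hx.ne'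
  rw [abs_of_nonpos (log_nonpos hx.le hx1)]
  nlinarith [one_sub_inv_le_log_of_pos hx]

theorem rpow_le_inv_pow {x γ : ℝ} {K : ℕ} (hx : 0 < x) (hx1 : x ≤ 1) (hγ : -K ≤ γ) :
    x ^ γ ≤ x⁻¹ ^ K := by
  calc x ^ γ ≤ x ^ (-K : ℝ) := rpow_le_rpow_of_exponent_ge hx hx1 hγ
    _ = x⁻¹ ^ K := by rw [rpow_neg hx.le, rpow_natCast, inv_pow]

theorem abs_rpow_sub_one_sub_mul_le {x γ : ℝ} {K : ℕ} (hx : 0 < x) (hx1 : x ≤ 1)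
    (hK : |γ| ≤ K) :
    |x ^ γ - 1 - γ * (x - 1)| ≤ (γ ^ 2 + |γ|) * (1 - x) ^ 2 * x⁻¹ ^ (K + 2) := by
  set L := log x
  set t := γ * L
  have hy : 1 ≤ x⁻¹ := one_le_inv₀ hx |>.mpr hx1
  have hexp : x ^ γ = exp t := by rw [rpow_def_of_pos hx, mul_comm]
  have hmax : max 1 (exp t) ≤ x⁻¹ ^ K :=
    max_le (one_le_pow₀ hy) (hexp ▸ rpow_le_inv_pow hx hx1 (by linarith [neg_abs_le γ]))
  have ht : t ^ 2 ≤ γ ^ 2 * ((1 - x) ^ 2 * x⁻¹ ^ 2) := by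
    calc t ^ 2 = γ ^ 2 * |L| ^ 2 := by rw [sq_abs]; ring
      _ ≤ γ ^ 2 * ((1 - x) * x⁻¹) ^ 2 := by gcongr; exact abs_log_le_one_sub_mul_inv hx hx1
      _ = γ ^ 2 * ((1 - x) ^ 2 * x⁻¹ ^ 2) := by ring
  have hexp_le : |exp t - 1 - t| ≤ γ ^ 2 * (1 - x) ^ 2 * x⁻¹ ^ (K + 2) := by
    rw [abs_of_nonneg (by linarith [add_one_le_exp t])]
    calc exp t - 1 - t ≤ t ^ 2 * max 1 (exp t) := exp_sub_one_sub_le_sq_mul_max t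
      _ ≤ γ ^ 2 * ((1 - x) ^ 2 * x⁻¹ ^ 2) * x⁻¹ ^ K := by gcongr
      _ = γ ^ 2 * (1 - x) ^ 2 * x⁻¹ ^ (K + 2) := by ring
  have hlog_le : |γ * (L - (x - 1))| ≤ |γ| * (1 - x) ^ 2 * x⁻¹ ^ (K + 2) := by
    rw [abs_mul, mul_assoc]
    gcongr
    calc |L - (x - 1)| ≤ (1 - x) ^ 2 * x⁻¹ := abs_log_sub_sub_one_le hx
      _ ≤ (1 - x) ^ 2 * x⁻¹ ^ (K + 2) := by
        gcongr; exact le_self_pow₀ hy (by omega)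
  calc |x ^ γ - 1 - γ * (x - 1)| = |(exp t - 1 - t) + γ * (L - (x - 1))| := by
        rw [hexp]; congr 1; simp only [t]; ring
    _ ≤ |exp t - 1 - t| + |γ * (L - (x - 1))| := abs_add_le _ _
    _ ≤ (γ ^ 2 + |γ|) * (1 - x) ^ 2 * x⁻¹ ^ (K + 2) := by linarith

theorem abs_rpow_sub_one_le {x γ : ℝ} {K : ℕ} (hx : 0 < x) (hx1 : x ≤ 1) (hK : |γ| ≤ K) :
    |x ^ γ - 1| ≤ (γ ^ 2 + 2 * |γ|) * (1 - x) * x⁻¹ ^ (K + 2) := by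
  have hy : 1 ≤ x⁻¹ ^ (K + 2) := one_le_pow₀ (one_le_inv₀ hx |>.mpr hx1)
  have hsq : (1 - x) ^ 2 ≤ 1 - x := by nlinarith
  calc |x ^ γ - 1| = |(x ^ γ - 1 - γ * (x - 1)) - γ * (1 - x)| := by ring_nf
    _ ≤ |x ^ γ - 1 - γ * (x - 1)| + |γ * (1 - x)| := abs_sub _ _
    _ = |x ^ γ - 1 - γ * (x - 1)| + |γ| * (1 - x) := by
        rw [abs_mul, abs_of_nonneg (sub_nonneg.mpr hx1)]
    _ ≤ (γ ^ 2 + |γ|) * (1 - x) * x⁻¹ ^ (K + 2) + |γ| * (1 - x) * x⁻¹ ^ (K + 2) := by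
        refine add_le_add ((abs_rpow_sub_one_sub_mul_le hx hx1 hK).trans (by gcongr))
          (le_mul_of_one_le_right (mul_nonneg (abs_nonneg _) (by linarith)) hy)
    _ = (γ ^ 2 + 2 * |γ|) * (1 - x) * x⁻¹ ^ (K + 2) := by ring

end Real

theorem exists_succ_pow_le_mul_pow {z : ℝ} (hz : 1 < z) (K : ℕ) :
    ∃ D : ℝ, ∀ j : ℕ, ((j : ℝ) + 1) ^ K ≤ D * z ^ j := by
  obtain ⟨B, hB⟩ := (tendsto_pow_const_div_const_pow_of_one_lt K hz).bddAbove_range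
  refine ⟨B * z, fun j => ?_⟩
  have h := (div_le_iff₀ (by positivity)).mp (hB ⟨j + 1, rfl⟩)
  push_cast at h
  rwa [pow_succ, ← mul_assoc, mul_right_comm] at h

theorem summable_mul_succ_pow {f : ℕ → ℝ} {z : ℝ} (hz : 1 < z)
    (hf : Summable fun j => |f j| * z ^ j) (K : ℕ) :
    Summable fun j => |f j| * ((j : ℝ) + 1) ^ K := by
  obtain ⟨D, hD⟩ := exists_succ_pow_le_mul_pow hz K
  refine (hf.mul_left D).of_nonneg_of_le (fun j => by positivity) fun j => ?_
  calc |f j| * ((j : ℝ) + 1) ^ K ≤ |f j| * (D * z ^ j) := by gcongr; exact hD j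
    _ = D * (|f j| * z ^ j) := by ring

theorem summable_succ_mul_abs_sub_mul {a b : ℕ → ℝ} {z : ℝ} (hz : 1 < z)
    (ha : Summable fun j => |a j| * z ^ j) (hb : Summable fun j => |b j| * z ^ j) (γ : ℝ) :
    Summable fun i : ℕ => ((i : ℝ) + 1) * |b (i + 1) - γ * ↑(i + 1) * a (i + 1)| := by
  have hj : Summable fun j : ℕ => (j : ℝ) * |b j - γ * j * a j| := by
    refine ((summable_mul_succ_pow hz hb 1).add
      ((summable_mul_succ_pow hz ha 2).mul_left |γ|)).of_nonneg_of_le (fun j => by positivity)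
      fun j => ?_
    have hj1 : (j : ℝ) ≤ j + 1 := le_add_of_nonneg_right zero_le_one
    calc (j : ℝ) * |b j - γ * j * a j| ≤ j * (|b j| + |γ * j * a j|) := by
          gcongr; exact abs_sub _ _
      _ = |b j| * j + |γ| * (|a j| * (j * j)) := by
          rw [abs_mul, abs_mul, Nat.abs_cast]; ring
      _ ≤ |b j| * ((j : ℝ) + 1) ^ 1 + |γ| * (|a j| * ((j : ℝ) + 1) ^ 2) := by
          rw [pow_one, sq]; gcongr
  exact ((summable_nat_add_iff 1).mpr hj).congr fun i => by push_cast; rfl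

theorem inv_one_sub_div_le {n j : ℕ} (hjn : j < n) : (1 - (j : ℝ) / n)⁻¹ ≤ j + 1 := by
  have hn : (0 : ℝ) < n := by exact_mod_cast (Nat.zero_le j).trans_lt hjn
  have hjn' : (j : ℝ) + 1 ≤ n := by exact_mod_cast hjn
  rw [inv_le_iff_one_le_mul₀ (by rw [sub_pos, div_lt_one hn]; linarith), one_sub_div hn.ne',
    mul_div_assoc', le_div_iff₀ hn]
  nlinarith

theorem one_sub_div_mem_Ioc {n j : ℕ} (hjn : j < n) : 1 - (j : ℝ) / n ∈ Set.Ioc 0 1 := by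
  have hn : (0 : ℝ) < n := by exact_mod_cast (Nat.zero_le j).trans_lt hjn
  exact ⟨sub_pos.mpr ((div_lt_one hn).mpr (by exact_mod_cast hjn)),
    sub_le_self _ (by positivity)⟩

theorem abs_one_sub_div_rpow_sub_one_add_le {γ : ℝ} {K : ℕ} (hK : |γ| ≤ K) {n j : ℕ}
    (hjn : j < n) :
    |(1 - (j : ℝ) / n) ^ γ - 1 + γ * (j / n)| ≤ (γ ^ 2 + |γ|) * ((j : ℝ) + 1) ^ (K + 4) / n ^ 2 := by
  obtain ⟨hx0, hx1⟩ := one_sub_div_mem_Ioc hjn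
  have h := Real.abs_rpow_sub_one_sub_mul_le hx0 hx1 hK
  rw [sub_sub_cancel, show ∀ y : ℝ, y - 1 - γ * (1 - j / n - 1) = y - 1 + γ * (j / n) by
    intro y; ring] at h
  calc _ ≤ (γ ^ 2 + |γ|) * ((j : ℝ) / n) ^ 2 * ((j : ℝ) + 1) ^ (K + 2) :=
        h.trans (by gcongr; exact inv_one_sub_div_le hjn)
    _ = (γ ^ 2 + |γ|) * ((j : ℝ) ^ 2 * ((j : ℝ) + 1) ^ (K + 2)) / n ^ 2 := by ring
    _ ≤ (γ ^ 2 + |γ|) * (((j : ℝ) + 1) ^ 2 * ((j : ℝ) + 1) ^ (K + 2)) / n ^ 2 := by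
        gcongr; linarith
    _ = _ := by ring

theorem abs_one_sub_div_rpow_sub_one_div_le {γ : ℝ} {K : ℕ} (hK : |γ| ≤ K) {n j : ℕ}
    (hjn : j < n) :
    |(1 - (j : ℝ) / n) ^ γ - 1| / n ≤ (γ ^ 2 + 2 * |γ|) * ((j : ℝ) + 1) ^ (K + 4) / n ^ 2 := by
  obtain ⟨hx0, hx1⟩ := one_sub_div_mem_Ioc hjn
  have h := Real.abs_rpow_sub_one_le hx0 hx1 hK
  rw [sub_sub_cancel] at h
  calc _ ≤ (γ ^ 2 + 2 * |γ|) * ((j : ℝ) / n) * ((j : ℝ) + 1) ^ (K + 2) / n :=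
        div_le_div_of_nonneg_right (h.trans (by gcongr; exact inv_one_sub_div_le hjn))
          (Nat.cast_nonneg n)
    _ = (γ ^ 2 + 2 * |γ|) * ((j : ℝ) * ((j : ℝ) + 1) ^ (K + 2)) / n ^ 2 := by ring
    _ ≤ (γ ^ 2 + 2 * |γ|) * (((j : ℝ) + 1) ^ 2 * ((j : ℝ) + 1) ^ (K + 2)) / n ^ 2 := by
        gcongr; nlinarith
    _ = _ := by ring

theorem one_sub_div_rpow_le {γ : ℝ} {K : ℕ} (hK : |γ| ≤ K) {n j : ℕ} (hjn : j < n) :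
    (1 - (j : ℝ) / n) ^ γ ≤ ((j : ℝ) + 1) ^ K := by
  obtain ⟨hx0, hx1⟩ := one_sub_div_mem_Ioc hjn
  exact (Real.rpow_le_inv_pow hx0 hx1 (by linarith [neg_abs_le γ])).trans
    (by gcongr; exact inv_one_sub_div_le hjn)

theorem abs_renewal_term_le {γ : ℝ} {K : ℕ} (hK : |γ| ≤ K) {n j : ℕ} (hjn : j < n)
    (α β c : ℝ) :
    |α * ((1 - (j : ℝ) / n) ^ γ - 1 + γ * (j / n)) + β / n * ((1 - (j : ℝ) / n) ^ γ - 1)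
        + c * (1 - (j : ℝ) / n) ^ γ|
      ≤ (γ ^ 2 + 2 * |γ|) * ((|α| + |β|) * (j + 1) ^ (K + 4)) / n ^ 2
        + |c| * (j + 1) ^ K := by
  set x : ℝ := 1 - j / n
  have hx0 : 0 ≤ x := (one_sub_div_mem_Ioc hjn).1.le
  calc |α * (x ^ γ - 1 + γ * (j / n)) + β / n * (x ^ γ - 1) + c * x ^ γ|
      ≤ |α| * |x ^ γ - 1 + γ * (j / n)| + |β| * (|x ^ γ - 1| / n) + |c| * x ^ γ := by
        refine (abs_add_le _ _).trans (add_le_add ((abs_add_le _ _).trans_eq ?_) ?_)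
        · rw [abs_mul, abs_mul, abs_div, Nat.abs_cast]; ring
        · rw [abs_mul, abs_of_nonneg (Real.rpow_nonneg hx0 γ)]
    _ ≤ |α| * ((γ ^ 2 + 2 * |γ|) * ((j : ℝ) + 1) ^ (K + 4) / n ^ 2)
          + |β| * ((γ ^ 2 + 2 * |γ|) * ((j : ℝ) + 1) ^ (K + 4) / n ^ 2)
          + |c| * ((j : ℝ) + 1) ^ K := by
        gcongr |α| * ?_ + |β| * ?_ + |c| * ?_
        · exact (abs_one_sub_div_rpow_sub_one_add_le hK hjn).trans
            (by gcongr; linarith [abs_nonneg γ])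
        · exact abs_one_sub_div_rpow_sub_one_div_le hK hjn
        · exact one_sub_div_rpow_le hK hjn
    _ = _ := by ring

theorem abs_sum_range_le_of_tsum_eq_zero {f : ℕ → ℝ}
    (hf : Summable fun i : ℕ => ((i : ℝ) + 1) * |f i|) (h0 : ∑' i, f i = 0) (m : ℕ) :
    |∑ i ∈ range m, f i| ≤ (∑' i : ℕ, ((i : ℝ) + 1) * |f i|) / (m + 1) := by
  have hm : (0 : ℝ) < m + 1 := by positivity
  have habs : Summable fun i => |f i| :=
    hf.of_nonneg_of_le (fun i => abs_nonneg _) fun i =>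
      le_mul_of_one_le_left (abs_nonneg _) (by linarith [i.cast_nonneg (α := ℝ)])
  have htail : Summable fun i => |f (i + m)| := (summable_nat_add_iff m).mpr habs
  have hsplit := habs.of_abs.sum_add_tsum_nat_add m
  rw [h0] at hsplit
  calc |∑ i ∈ range m, f i| = |∑' i, f (i + m)| := by
        rw [eq_neg_of_add_eq_zero_left hsplit, abs_neg]
    _ ≤ ∑' i, |f (i + m)| := by
        simpa only [Real.norm_eq_abs] using norm_tsum_le_tsum_norm (f := fun i => f (i + m)) htail
    _ ≤ ∑' i, ((↑(i + m) : ℝ) + 1) * |f (i + m)| / (m + 1) := by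
        refine htail.tsum_le_tsum (fun i => ?_)
          (((summable_nat_add_iff m).mpr hf).div_const _)
        rw [le_div_iff₀ hm, mul_comm]
        gcongr
        linarith [i.cast_nonneg (α := ℝ)]
    _ ≤ (∑' i : ℕ, ((i : ℝ) + 1) * |f i|) / (m + 1) := by
        rw [tsum_div_const]
        exact div_le_div_of_nonneg_right
          (tsum_comp_le_tsum_of_inj hf (fun i => by positivity) (add_left_injective m)) hm.le

theorem abs_sum_renewal_error_le (a b c : ℕ → ℝ) {γ : ℝ} {K : ℕ} (hK : |γ| ≤ K) {n : ℕ}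
    (s : Finset ℕ) (hs : ∀ j ∈ s, j < n) :
    |∑ j ∈ s, ((a j + b j / n + c j) * (1 - (j : ℝ) / n) ^ γ - a j)|
      ≤ (γ ^ 2 + 2 * |γ|) * (∑ j ∈ s, (|a j| + |b j|) * ((j : ℝ) + 1) ^ (K + 4)) / n ^ 2
        + ∑ j ∈ s, |c j| * ((j : ℝ) + 1) ^ K
        + |∑ j ∈ s, (b j - γ * j * a j)| / n := by
  have hdecomp : ∀ j : ℕ, (a j + b j / n + c j) * (1 - (j : ℝ) / n) ^ γ - a j
      = (a j * ((1 - (j : ℝ) / n) ^ γ - 1 + γ * (j / n)) + b j / n * ((1 - (j : ℝ) / n) ^ γ - 1)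
          + c j * (1 - (j : ℝ) / n) ^ γ) + (b j - γ * j * a j) / n := fun j => by ring
  rw [sum_congr rfl fun j _ => hdecomp j, sum_add_distrib, ← sum_div]
  refine (abs_add_le _ _).trans (add_le_add ?_ (by rw [abs_div, Nat.abs_cast]))
  refine (abs_sum_le_sum_abs _ _).trans ((sum_le_sum fun j hj =>
    abs_renewal_term_le hK (hs j hj) (a j) (b j) (c j)).trans_eq ?_)
  rw [sum_add_distrib, ← sum_div, ← mul_sum]

theorem one_le_tsum_succ_mul {a : ℕ → ℝ} (ha_nn : ∀ n : ℕ, 1 ≤ n → 0 ≤ a n)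
    (ha_one : ∑' n : ℕ, a (n + 1) = 1) (ha : Summable fun n : ℕ => ((n : ℝ) + 1) * a (n + 1)) :
    1 ≤ ∑' n : ℕ, ((n : ℝ) + 1) * a (n + 1) := by
  have ha_sum : Summable fun n : ℕ => a (n + 1) := by
    by_contra h
    rw [tsum_eq_zero_of_not_summable h] at ha_one
    exact zero_ne_one ha_one
  exact ha_one.ge.trans <| ha_sum.tsum_le_tsum (fun n => le_mul_of_one_le_left
    (ha_nn _ le_add_self) (le_add_of_nonneg_left n.cast_nonneg)) ha

theorem tsum_sub_mul_succ_mul_eq_zero {a b : ℕ → ℝ} {γ : ℝ}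
    (ha_nn : ∀ n : ℕ, 1 ≤ n → 0 ≤ a n) (ha_one : ∑' n : ℕ, a (n + 1) = 1)
    (ha : Summable fun n : ℕ => ((n : ℝ) + 1) * a (n + 1)) (hb : Summable fun n : ℕ => b (n + 1))
    (hγ : γ = (∑' n : ℕ, b (n + 1)) / (∑' n : ℕ, ((n : ℝ) + 1) * a (n + 1))) :
    ∑' i : ℕ, (b (i + 1) - γ * ↑(i + 1) * a (i + 1)) = 0 := by
  have hmean : ∑' n : ℕ, ((n : ℝ) + 1) * a (n + 1) ≠ 0 :=
    (zero_lt_one.trans_le (one_le_tsum_succ_mul ha_nn ha_one ha)).ne'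
  have h : ∑' i : ℕ, (b (i + 1) - γ * (((i : ℝ) + 1) * a (i + 1))) = 0 := by
    rw [hb.tsum_sub (ha.mul_left γ), tsum_mul_left, hγ, div_mul_cancel₀ _ hmean, sub_self]
  simpa only [Nat.cast_add_one, mul_assoc] using h

theorem abs_sum_Ico_div_le_of_tsum_eq_zero {f : ℕ → ℝ}
    (hf : Summable fun i : ℕ => ((i : ℝ) + 1) * |f (i + 1)|) (h0 : ∑' i, f (i + 1) = 0)
    {k n : ℕ} (hk : 1 ≤ k) (hkn : k < n) :
    |∑ j ∈ Ico 1 (n - k + 1), f j| / n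
      ≤ k * (∑' i : ℕ, ((i : ℝ) + 1) * |f (i + 1)|) / n ^ 2 := by
  set E := ∑' i : ℕ, ((i : ℝ) + 1) * |f (i + 1)|
  have hn : (0 : ℝ) < n := Nat.cast_pos.mpr (by omega)
  have hE : 0 ≤ E := tsum_nonneg fun i => by positivity
  have htail := abs_sum_range_le_of_tsum_eq_zero hf h0 (n - k)
  rw [range_eq_Ico, sum_Ico_add' f 0 (n - k) 1] at htail
  have hnk : (n : ℝ) ≤ k * ((↑(n - k) : ℝ) + 1) := by
    rw [Nat.cast_sub hkn.le]
    have : (1 : ℝ) ≤ k := by exact_mod_cast hk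
    have : (k : ℝ) < n := by exact_mod_cast hkn
    nlinarith
  calc |∑ j ∈ Ico 1 (n - k + 1), f j| / n ≤ E / ((↑(n - k) : ℝ) + 1) / n := by
        gcongr
    _ ≤ k * E / n ^ 2 := by
        rw [div_div, div_le_div_iff₀ (by positivity) (by positivity)]
        nlinarith [mul_le_mul_of_nonneg_left hnk (mul_nonneg hE hn.le)]

theorem abs_sum_renewal_error_le_majorant (a b c : ℕ → ℝ) {γ z D : ℝ} {K : ℕ} (hK : |γ| ≤ K)
    (hD : ∀ j : ℕ, ((j : ℝ) + 1) ^ K ≤ D * z ^ j)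
    (hg : Summable fun j : ℕ => (|a j| + |b j|) * ((j : ℝ) + 1) ^ (K + 4))
    (he : Summable fun i : ℕ => ((i : ℝ) + 1) * |b (i + 1) - γ * ↑(i + 1) * a (i + 1)|)
    (he0 : ∑' i : ℕ, (b (i + 1) - γ * ↑(i + 1) * a (i + 1)) = 0)
    {k n : ℕ} (hk : 1 ≤ k) (hkn : k < n) :
    |∑ j ∈ Ico 1 (n - k + 1), ((a j + b j / n + c j) * (1 - (j : ℝ) / n) ^ γ - a j)|
      ≤ ((γ ^ 2 + 2 * |γ|) * (∑' j : ℕ, (|a j| + |b j|) * ((j : ℝ) + 1) ^ (K + 4))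
          + k * ∑' i : ℕ, ((i : ℝ) + 1) * |b (i + 1) - γ * ↑(i + 1) * a (i + 1)|)
          * ((n : ℝ) ^ 2)⁻¹
        + D * ∑ j ∈ Ico 1 n, |c j| * z ^ j := by
  have hsub : Ico 1 (n - k + 1) ⊆ Ico 1 n := Ico_subset_Ico_right (by omega)
  refine (abs_sum_renewal_error_le a b c hK _ fun j hj => (mem_Ico.mp (hsub hj)).2).trans ?_
  have hg_le := hg.sum_le_tsum (Ico 1 (n - k + 1)) fun j _ => by positivity
  have hc_le : ∑ j ∈ Ico 1 (n - k + 1), |c j| * ((j : ℝ) + 1) ^ K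
      ≤ D * ∑ j ∈ Ico 1 n, |c j| * z ^ j := by
    rw [mul_sum]
    refine (sum_le_sum_of_subset_of_nonneg hsub fun j _ _ => by positivity).trans
      (sum_le_sum fun j _ => ?_)
    calc |c j| * ((j : ℝ) + 1) ^ K ≤ |c j| * (D * z ^ j) := by gcongr; exact hD j
      _ = D * (|c j| * z ^ j) := by ring
  have he_le := abs_sum_Ico_div_le_of_tsum_eq_zero
    (f := fun j => b j - γ * j * a j) he he0 hk hkn
  calc _ ≤ (γ ^ 2 + 2 * |γ|) * (∑' j : ℕ, (|a j| + |b j|) * ((j : ℝ) + 1) ^ (K + 4)) / n ^ 2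
        + D * ∑ j ∈ Ico 1 n, |c j| * z ^ j
        + k * (∑' i : ℕ, ((i : ℝ) + 1) * |b (i + 1) - γ * ↑(i + 1) * a (i + 1)|) / n ^ 2 := by
        gcongr
    _ = _ := by ring

theorem summable_abs_sum_renewal_error (a b : ℕ → ℝ) (c : ℕ → ℕ → ℝ) {γ z D : ℝ} {K : ℕ}
    (hK : |γ| ≤ K) (hD : ∀ j : ℕ, ((j : ℝ) + 1) ^ K ≤ D * z ^ j)
    (hg : Summable fun j : ℕ => (|a j| + |b j|) * ((j : ℝ) + 1) ^ (K + 4))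
    (he : Summable fun i : ℕ => ((i : ℝ) + 1) * |b (i + 1) - γ * ↑(i + 1) * a (i + 1)|)
    (he0 : ∑' i : ℕ, (b (i + 1) - γ * ↑(i + 1) * a (i + 1)) = 0)
    (hcz : Summable fun n : ℕ => ∑ j ∈ Ico 1 n, |c n j| * z ^ j) {k : ℕ} (hk : 1 ≤ k) :
    Summable fun n : ℕ => |∑ j ∈ Ico 1 (n - k + 1),
      ((a j + b j / n + c n j) * (1 - (j : ℝ) / n) ^ γ - a j)| := by
  set X := (γ ^ 2 + 2 * |γ|) * (∑' j : ℕ, (|a j| + |b j|) * ((j : ℝ) + 1) ^ (K + 4))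
    + k * ∑' i : ℕ, ((i : ℝ) + 1) * |b (i + 1) - γ * ↑(i + 1) * a (i + 1)|
  refine (summable_nat_add_iff (k + 1)).mp <| Summable.of_nonneg_of_le (fun _ => abs_nonneg _)
    (fun m => abs_sum_renewal_error_le_majorant a b (c _) hK hD hg he he0 hk (by omega)) <|
      (summable_nat_add_iff (k + 1)).mpr <|
        ((Real.summable_nat_pow_inv.mpr one_lt_two).mul_left X).add (hcz.mul_left D)

theorem discrete_renewal_summable_error_general
    (a b : ℕ → ℝ) (c : ℕ → ℕ → ℝ) (w : ℕ → ℕ → ℝ)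
    (hw : ∀ n j : ℕ, w n j = a j + b j / (n : ℝ) + c n j)
    -- (r1), normalized
    (ha_nn : ∀ n : ℕ, 1 ≤ n → 0 ≤ a n)
    (ha_one : ∑' n : ℕ, a (n + 1) = 1)
    -- (r3), normalized with z > 1
    (z : ℝ) (hz : 1 < z)
    (haz : Summable fun n : ℕ => a (n + 1) * z ^ (n + 1))
    (hbz : Summable fun n : ℕ => |b (n + 1)| * z ^ (n + 1))
    (hcz : Summable fun n : ℕ => ∑ j ∈ Finset.Ico 1 n, |c n j| * z ^ j)
    (γ : ℝ)
    (hγ : γ = (∑' n : ℕ, b (n + 1)) / (∑' n : ℕ, ((n : ℝ) + 1) * a (n + 1))) :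
    ∀ k : ℕ, 1 ≤ k →
      Summable (fun n : ℕ =>
        |∑ j ∈ Finset.Ico 1 (n - k + 1),
          (w n j * ((1 : ℝ) - (j : ℝ) / (n : ℝ)) ^ γ - a j)|) := by
  intro k hk
  obtain ⟨K, hK⟩ : ∃ K : ℕ, |γ| ≤ K := ⟨⌈|γ|⌉₊, Nat.le_ceil _⟩
  obtain ⟨D, hD⟩ := exists_succ_pow_le_mul_pow hz K
  have ha : Summable fun j => |a j| * z ^ j :=
    (summable_nat_add_iff 1).mp <| haz.congr fun j => by rw [abs_of_nonneg (ha_nn _ le_add_self)]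
  have hb : Summable fun j => |b j| * z ^ j := (summable_nat_add_iff 1).mp hbz
  have hmean : Summable fun n : ℕ => ((n : ℝ) + 1) * a (n + 1) :=
    ((summable_nat_add_iff 1).mpr (summable_mul_succ_pow hz ha 1)).of_nonneg_of_le
      (fun n => mul_nonneg (by positivity) (ha_nn _ le_add_self)) fun n => by
        rw [abs_of_nonneg (ha_nn _ le_add_self)]; push_cast
        nlinarith [ha_nn (n + 1) le_add_self]
  have hb1 : Summable fun n : ℕ => b (n + 1) := by
    have h : Summable fun j => |b j| := by
      simpa only [pow_zero, mul_one] using summable_mul_succ_pow hz hb 0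
    exact (summable_nat_add_iff 1).mpr h.of_abs
  have hg : Summable fun j : ℕ => (|a j| + |b j|) * ((j : ℝ) + 1) ^ (K + 4) := by
    simpa only [add_mul] using (summable_mul_succ_pow hz ha _).add (summable_mul_succ_pow hz hb _)
  simpa only [hw] using summable_abs_sum_renewal_error a b c hK hD hg
    (summable_succ_mul_abs_sub_mul hz ha hb γ)
    (tsum_sub_mul_succ_mul_eq_zero ha_nn ha_one hmean hb1 hγ) hcz hk

/-- Lemma 3.2 of the paper (normalized case `∑ a_n = 1`, `z > 1`):
for every positive integer `k`,
`∑_{n=k}^∞ | ∑_{j=1}^{n-k} ( w n j * (1 - j/n)^γ - a j ) | < ∞`. -/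
theorem discrete_renewal_summable_error
    (a b : ℕ → ℝ) (c : ℕ → ℕ → ℝ) (w : ℕ → ℕ → ℝ)
    (hw : ∀ n j : ℕ, w n j = a j + b j / (n : ℝ) + c n j)
    (hwnn : ∀ n : ℕ, ∀ j ∈ Finset.Ico 1 n, 0 ≤ w n j)
    -- (r1), normalized
    (ha_nn : ∀ n : ℕ, 1 ≤ n → 0 ≤ a n)
    (hgcd : ∀ d : ℕ, (∀ n : ℕ, 1 ≤ n → 0 < a n → d ∣ n) → d = 1)
    (ha_one : ∑' n : ℕ, a (n + 1) = 1)
    -- (r3), normalized with z > 1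
    (z : ℝ) (hz : 1 < z)
    (haz : Summable fun n : ℕ => a (n + 1) * z ^ (n + 1))
    (hbz : Summable fun n : ℕ => |b (n + 1)| * z ^ (n + 1))
    (hcz : Summable fun n : ℕ => ∑ j ∈ Finset.Ico 1 n, |c n j| * z ^ j)
    (γ : ℝ)
    (hγ : γ = (∑' n : ℕ, b (n + 1)) / (∑' n : ℕ, ((n : ℝ) + 1) * a (n + 1))) :
    ∀ k : ℕ, 1 ≤ k →
      Summable (fun n : ℕ =>
        |∑ j ∈ Finset.Ico 1 (n - k + 1),
          (w n j * ((1 : ℝ) - (j : ℝ) / (n : ℝ)) ^ γ - a j)|) :=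
  discrete_renewal_summable_error_general a b c w hw ha_nn ha_one z hz haz hbz hcz γ hγ
end

section
/- Assume the normalized conditions: the recursion x_n = Σ_{j=1}^{n-1} w_{n,j} x_{n-j} + r_n holds with w_{n,j} = a_j + b_j/n + c_{n,j} ≥ 0, conditions (r1)–(r3) hold with Σ_{n=1}^∞ a_n = 1 and z > 1, and set γ = (Σ_{n=1}^∞ b_n)/(Σ_{n=1}^∞ n a_n). Then the sequence y_n = x_n n^{-γ} is bounded from above. -/
/-!
Rescaling `y n = x n * n ^ (-γ)` turns the recursion into
`y n = ∑ j, q n j * y (n - j) + r n * n ^ (-γ)` with `q n j = w n j * (1 - j / n) ^ γ`.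
The second-order bound `(1 - j / n) ^ γ ≤ 1 - γ j / n + K j ^ (|γ| + 2) / n ^ 2` gives
`∑ j, q n j ≤ 1 + D n` with `D n = O(n⁻²) + O(∑ j, |c n j| z ^ j)` summable: the `1 / n` terms
are `(1 / n) ∑_{j < n} (b j - γ j a j)`, and the choice of `γ` makes this series sum to `0`, so
its partial sums are `O(1 / n)`; the exponential moments control every polynomial moment that
occurs. A discrete Gronwall argument then gives `y n ≤ (∑ k, r k k ^ (-γ)) * exp (∑ k, D k)`.
-/

open Finset

theorem exists_rpow_le_mul_pow (p : ℝ) {z : ℝ} (hz : 1 < z) :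
    ∃ K, 0 ≤ K ∧ ∀ j : ℕ, (j : ℝ) ^ p ≤ K * z ^ j := by
  obtain ⟨K, hK⟩ := (tendsto_pow_const_div_const_pow_of_one_lt ⌈p⌉₊ hz).bddAbove_range
  refine ⟨max K 1, zero_le_one.trans (le_max_right _ _), fun j => ?_⟩
  rcases Nat.eq_zero_or_pos j with rfl | hj
  · simpa using Or.inr (Real.zero_rpow_le_one p)
  calc (j : ℝ) ^ p ≤ (j : ℝ) ^ (⌈p⌉₊ : ℝ) :=
        Real.rpow_le_rpow_of_exponent_le (by exact_mod_cast hj) (Nat.le_ceil p)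
    _ = (j : ℝ) ^ ⌈p⌉₊ / z ^ j * z ^ j := by rw [Real.rpow_natCast]; field_simp
    _ ≤ max K 1 * z ^ j := by gcongr; exact (hK ⟨j, rfl⟩).trans (le_max_left _ _)

theorem summable_mul_rpow_of_summable_mul_pow {f : ℕ → ℝ} {z : ℝ} (hz : 1 < z)
    (hf : Summable fun k : ℕ => f (k + 1) * z ^ (k + 1)) (p : ℝ) :
    Summable fun k : ℕ => f (k + 1) * ((k + 1 : ℕ) : ℝ) ^ p := by
  obtain ⟨K, -, hK⟩ := exists_rpow_le_mul_pow p hz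
  refine Summable.of_norm_bounded (hf.abs.mul_left K) fun k => ?_
  rw [Real.norm_eq_abs, abs_mul, abs_mul, abs_of_nonneg (Real.rpow_nonneg (Nat.cast_nonneg _) p),
    abs_of_pos (pow_pos (zero_lt_one.trans hz) _)]
  calc |f (k + 1)| * ((k + 1 : ℕ) : ℝ) ^ p ≤ |f (k + 1)| * (K * z ^ (k + 1)) := by
        gcongr; exact hK _
    _ = K * (|f (k + 1)| * z ^ (k + 1)) := by ring

theorem tsum_sub_mul_eq_zero {a b : ℕ → ℝ} {γ : ℝ} (ha_nn : ∀ n, 1 ≤ n → 0 ≤ a n)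
    (ha_one : ∑' n, a (n + 1) = 1) (ha : Summable fun k : ℕ => a (k + 1))
    (hμ : Summable fun k : ℕ => ((k : ℝ) + 1) * a (k + 1)) (hb : Summable fun k : ℕ => b (k + 1))
    (hγ : γ = (∑' n : ℕ, b (n + 1)) / ∑' n : ℕ, ((n : ℝ) + 1) * a (n + 1)) :
    ∑' k : ℕ, (b (k + 1) - γ * ((k + 1 : ℕ) : ℝ) * a (k + 1)) = 0 := by
  have hμ_pos : 0 < ∑' k : ℕ, ((k : ℝ) + 1) * a (k + 1) := by
    refine zero_lt_one.trans_le (ha_one.symm.le.trans (ha.tsum_le_tsum (fun k => ?_) hμ))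
    exact le_mul_of_one_le_left (ha_nn _ k.succ_pos) (by linarith [k.cast_nonneg (α := ℝ)])
  simp only [Nat.cast_succ, mul_assoc]
  rw [hb.tsum_sub (hμ.mul_left γ), tsum_mul_left, hγ, div_mul_cancel₀ _ hμ_pos.ne', sub_self]

theorem summable_mul_abs_sub_mul {a b : ℕ → ℝ} (γ : ℝ) (ha_nn : ∀ n, 1 ≤ n → 0 ≤ a n)
    (ha : Summable fun k : ℕ => ((k : ℝ) + 1) ^ 2 * a (k + 1))
    (hb : Summable fun k : ℕ => ((k : ℝ) + 1) * |b (k + 1)|) :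
    Summable fun k : ℕ => ((k : ℝ) + 1) * |b (k + 1) - γ * ((k + 1 : ℕ) : ℝ) * a (k + 1)| := by
  refine (hb.add (ha.mul_left |γ|)).of_nonneg_of_le (fun k => by positivity) fun k => ?_
  have hk : (0 : ℝ) ≤ k + 1 := by positivity
  have h := abs_sub (b (k + 1)) (γ * ((k + 1 : ℕ) : ℝ) * a (k + 1))
  rw [abs_mul, abs_mul, Nat.cast_succ, abs_of_nonneg hk, abs_of_nonneg (ha_nn (k + 1) k.succ_pos)]
    at h
  rw [Nat.cast_succ]
  nlinarith [mul_le_mul_of_nonneg_left h hk]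

theorem Finset.sum_Ico_one_eq_sum_range {M : Type*} [AddCommMonoid M] (f : ℕ → M) (n : ℕ) :
    ∑ j ∈ Ico 1 n, f j = ∑ k ∈ range (n - 1), f (k + 1) := by
  rw [sum_Ico_eq_sum_range]; simp only [add_comm 1]

theorem sum_Ico_one_le_tsum {f : ℕ → ℝ} (hf : Summable fun k => f (k + 1))
    (h : ∀ j, 1 ≤ j → 0 ≤ f j) (n : ℕ) : ∑ j ∈ Ico 1 n, f j ≤ ∑' k, f (k + 1) := by
  rw [sum_Ico_one_eq_sum_range]
  exact hf.sum_le_tsum _ fun k _ => h _ k.succ_pos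

theorem mul_abs_sum_range_le_tsum {g : ℕ → ℝ} (hg : Summable fun k : ℕ => ((k : ℝ) + 1) * |g k|)
    (h0 : ∑' k, g k = 0) (m : ℕ) :
    (m + 1) * |∑ k ∈ range m, g k| ≤ ∑' k : ℕ, ((k : ℝ) + 1) * |g k| := by
  have hg' : Summable g := (hg.of_nonneg_of_le (fun k => abs_nonneg _)
    fun k => le_mul_of_one_le_left (abs_nonneg _) (by linarith [k.cast_nonneg (α := ℝ)])).of_abs
  have htail : ∑ k ∈ range m, g k = -∑' k, g (k + m) := by
    linarith [hg'.sum_add_tsum_nat_add m]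
  have hg_tail := (summable_nat_add_iff m).2 hg
  calc (m + 1) * |∑ k ∈ range m, g k| ≤ (m + 1) * ∑' k, |g (k + m)| := by
        rw [htail, abs_neg]; gcongr
        simpa only [Real.norm_eq_abs] using
          norm_tsum_le_tsum_norm (f := fun k => g (k + m)) ((summable_nat_add_iff m).2 hg'.abs)
    _ ≤ ∑' k, (((k + m : ℕ) : ℝ) + 1) * |g (k + m)| := by
        rw [← tsum_mul_left]
        refine ((summable_nat_add_iff m).2 hg'.abs |>.mul_left _).tsum_le_tsum (fun k => ?_) hg_tail
        gcongr; linarith [k.cast_nonneg (α := ℝ)]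
    _ ≤ ∑' k : ℕ, ((k : ℝ) + 1) * |g k| := by
        rw [← hg.sum_add_tsum_nat_add m]
        exact le_add_of_nonneg_left (sum_nonneg fun k _ => by positivity)

theorem sum_Ico_one_div_le_tsum {f : ℕ → ℝ} (hf : Summable fun k : ℕ => ((k : ℝ) + 1) * |f (k + 1)|)
    (h0 : ∑' k, f (k + 1) = 0) {n : ℕ} (hn : 1 ≤ n) :
    (∑ j ∈ Ico 1 n, f j) / n ≤ (∑' k : ℕ, ((k : ℝ) + 1) * |f (k + 1)|) / n ^ 2 := by
  have h := mul_abs_sum_range_le_tsum hf h0 (n - 1)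
  rw [← sum_Ico_one_eq_sum_range, Nat.cast_sub hn, Nat.cast_one, sub_add_cancel] at h
  have hn' : (0 : ℝ) < n := by exact_mod_cast hn
  rw [div_le_div_iff₀ hn' (by positivity)]
  nlinarith [le_abs_self (∑ j ∈ Ico 1 n, f j)]

theorem Real.one_sub_rpow_le_one_sub_mul_add_sq {γ t : ℝ} (ht0 : 0 ≤ t)
    (ht : t ≤ 1 / (2 * (|γ| + 1))) :
    (1 - t) ^ γ ≤ 1 - γ * t + (2 * |γ| + 4 * γ ^ 2) * t ^ 2 := by
  have hγ := abs_nonneg γ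
  have ht2 : t ≤ 1 / 2 := ht.trans (by gcongr; linarith)
  have h1t : 0 < 1 - t := by linarith
  set L := -Real.log (1 - t)
  -- `t ≤ L ≤ t / (1 - t) ≤ t + 2 t ^ 2`
  have hL₁ : t ≤ L := by linarith [Real.log_le_sub_one_of_pos h1t]
  have hL₂ : L ≤ t + 2 * t ^ 2 := by
    have h := Real.one_sub_inv_le_log_of_pos h1t
    have : (1 - t)⁻¹ ≤ 1 + t + 2 * t ^ 2 := by
      rw [inv_le_iff_one_le_mul₀ h1t]; nlinarith
    linarith
  have hL₃ : L ≤ 2 * t := by nlinarith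
  have hγL : |-(γ * L)| ≤ 1 := by
    rw [abs_neg, abs_mul, abs_of_nonneg (ht0.trans hL₁)]
    calc |γ| * L ≤ |γ| * (2 * (1 / (2 * (|γ| + 1)))) := by gcongr; linarith
      _ = |γ| / (|γ| + 1) := by field_simp
      _ ≤ 1 := by rw [div_le_one (by linarith)]; linarith
  have hexp := (abs_le.1 (Real.abs_exp_sub_one_sub_id_le hγL)).2
  have hlin : -(γ * (L - t)) ≤ |γ| * (2 * t ^ 2) :=
    calc -(γ * (L - t)) ≤ |γ * (L - t)| := neg_le_abs _
      _ = |γ| * (L - t) := by rw [abs_mul, abs_of_nonneg (sub_nonneg.2 hL₁)]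
      _ ≤ |γ| * (2 * t ^ 2) := by gcongr; linarith
  have hsq : (-(γ * L)) ^ 2 ≤ 4 * γ ^ 2 * t ^ 2 := by
    rw [neg_sq, mul_pow]
    nlinarith [mul_le_mul_of_nonneg_left (pow_le_pow_left₀ (ht0.trans hL₁) hL₃ 2) (sq_nonneg γ)]
  rw [Real.rpow_def_of_pos h1t, mul_comm, ← neg_neg (Real.log (1 - t)), mul_neg]
  nlinarith

theorem exists_one_sub_rpow_le (γ : ℝ) :
    ∃ K, 0 ≤ K ∧ ∀ t s : ℝ, 0 ≤ t → t < 1 → 1 ≤ (1 - t) * s →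
      (1 - t) ^ γ ≤ 1 - γ * t + K * t ^ 2 * s ^ |γ| := by
  set δ := 1 / (2 * (|γ| + 1))
  refine ⟨2 * |γ| + 4 * γ ^ 2 + (1 + |γ|) / δ ^ 2, by positivity, fun t s ht0 ht1 hs => ?_⟩
  have h1t : 0 < 1 - t := by linarith
  have hs1 : 1 ≤ s := by nlinarith
  have hsγ : 1 ≤ s ^ |γ| := Real.one_le_rpow hs1 (abs_nonneg γ)
  rcases le_or_gt t δ with htδ | htδ
  · calc (1 - t) ^ γ ≤ 1 - γ * t + (2 * |γ| + 4 * γ ^ 2) * t ^ 2 :=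
          Real.one_sub_rpow_le_one_sub_mul_add_sq ht0 htδ
      _ ≤ 1 - γ * t + (2 * |γ| + 4 * γ ^ 2 + (1 + |γ|) / δ ^ 2) * t ^ 2 * s ^ |γ| := by
        have : 0 ≤ (1 + |γ|) / δ ^ 2 * t ^ 2 := by positivity
        have := mul_le_mul_of_nonneg_left hsγ
          (by positivity : 0 ≤ (2 * |γ| + 4 * γ ^ 2 + (1 + |γ|) / δ ^ 2) * t ^ 2)
        nlinarith
  · -- far from `0`, the crude bound `(1 - t) ^ γ ≤ s ^ |γ|` is absorbed by the quadratic term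
    have hfar : (1 - t) ^ γ ≤ s ^ |γ| :=
      calc (1 - t) ^ γ ≤ (1 - t) ^ (-|γ|) :=
            Real.rpow_le_rpow_of_exponent_ge h1t (by linarith) (neg_abs_le γ)
        _ = ((1 - t)⁻¹) ^ |γ| := by rw [Real.rpow_neg h1t.le, Real.inv_rpow h1t.le]
        _ ≤ s ^ |γ| := by
          gcongr
          rw [inv_le_iff_one_le_mul₀' h1t]; exact hs
    have hquad : 1 + |γ| ≤ (1 + |γ|) / δ ^ 2 * t ^ 2 := by
      rw [div_mul_eq_mul_div, le_div_iff₀ (by positivity)]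
      gcongr
    have : γ * t ≤ |γ| := by nlinarith [neg_abs_le γ, le_abs_self γ]
    have := mul_le_mul_of_nonneg_right hquad (by positivity : 0 ≤ s ^ |γ|)
    have := mul_le_mul_of_nonneg_left hsγ (abs_nonneg γ)
    have : 0 ≤ (2 * |γ| + 4 * γ ^ 2) * t ^ 2 * s ^ |γ| := by positivity
    nlinarith

theorem exists_natCast_sub_rpow_mul_le (γ : ℝ) :
    ∃ K, 0 ≤ K ∧ ∀ n j : ℕ, 1 ≤ j → j < n →
      ((n - j : ℕ) : ℝ) ^ γ * (n : ℝ) ^ (-γ) ≤ 1 - γ * j / n + K * (j : ℝ) ^ (|γ| + 2) / n ^ 2 := by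
  obtain ⟨K, hK, hle⟩ := exists_one_sub_rpow_le γ
  refine ⟨K * 2 ^ |γ|, by positivity, fun n j hj hjn => ?_⟩
  have hj' : (1 : ℝ) ≤ j := by exact_mod_cast hj
  have hn : (0 : ℝ) < n := by exact_mod_cast (zero_lt_one.trans_le hj).trans hjn
  have hjn' : (j : ℝ) + 1 ≤ n := by exact_mod_cast hjn
  have hsub : ((n - j : ℕ) : ℝ) = n * (1 - j / n) := by
    rw [Nat.cast_sub hjn.le]; field_simp
  have h1t : (0 : ℝ) ≤ 1 - j / n := by rw [sub_nonneg, div_le_one hn]; linarith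
  -- `n / (n - j) ≤ 2 j` since `n ≤ 2 j (n - j)` for `1 ≤ j < n`
  have hs : (1 : ℝ) ≤ (1 - j / n) * (2 * j) := by
    rw [one_sub_div hn.ne', div_mul_eq_mul_div, le_div_iff₀ hn]; nlinarith
  calc ((n - j : ℕ) : ℝ) ^ γ * (n : ℝ) ^ (-γ) = (1 - j / n) ^ γ := by
        rw [hsub, Real.mul_rpow hn.le h1t, Real.rpow_neg hn.le, mul_comm, ← mul_assoc,
          inv_mul_cancel₀ (Real.rpow_pos_of_pos hn γ).ne', one_mul]
    _ ≤ 1 - γ * (j / n) + K * (j / n) ^ 2 * (2 * j) ^ |γ| :=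
        hle _ _ (by positivity) (by rw [div_lt_one hn]; linarith) hs
    _ = 1 - γ * j / n + K * 2 ^ |γ| * (j : ℝ) ^ (|γ| + 2) / n ^ 2 := by
        rw [Real.mul_rpow (by norm_num) (by positivity), Real.rpow_add (by positivity),
          Real.rpow_two]
        field_simp

theorem add_div_add_mul_le_of_le_one_sub {a b c γ K n j ω q : ℝ} (hn : 1 ≤ n) (hj : 0 ≤ j)
    (hjn : j ≤ n) (hjω : j ≤ ω) (hω : 1 ≤ ω) (hK : 0 ≤ K) (ha : 0 ≤ a) (hw : 0 ≤ a + b / n + c)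
    (hq : q ≤ 1 - γ * j / n + K * ω / n ^ 2) :
    (a + b / n + c) * q ≤
      a + (b - γ * j * a) / n + (K + |γ|) * ((a + |b|) * ω) / n ^ 2
        + (1 + |γ| + K) * (|c| * ω) := by
  have hn0 : 0 < n := by linarith
  set E := 1 - γ * j / n + K * ω / n ^ 2
  have hE : |E| ≤ (1 + |γ| + K) * ω := by
    have h1 : |γ * j / n| ≤ |γ| := by
      rw [abs_div, abs_mul, abs_of_nonneg hj, abs_of_pos hn0, div_le_iff₀ hn0]; gcongr
    have h2 : K * ω / n ^ 2 ≤ K * ω := div_le_self (by positivity) (one_le_pow₀ hn)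
    calc |E| ≤ 1 + |γ * j / n| + |K * ω / n ^ 2| := by
          refine (abs_add_le _ _).trans ?_; gcongr; exact (abs_sub _ _).trans (by simp)
      _ ≤ (1 + |γ| + K) * ω := by
          rw [abs_of_nonneg (by positivity : 0 ≤ K * ω / n ^ 2)]; nlinarith [abs_nonneg γ]
  have hb : b / n * E ≤ b / n + (|γ| + K) * ω * |b| / n ^ 2 := by
    have h1 : -(γ * j * b) ≤ |γ| * ω * |b| :=
      calc -(γ * j * b) ≤ |γ * j * b| := neg_le_abs _
        _ = |γ| * j * |b| := by rw [abs_mul, abs_mul, abs_of_nonneg hj]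
        _ ≤ |γ| * ω * |b| := by gcongr
    have h2 : K * ω * b / n ^ 3 ≤ K * ω * |b| / n ^ 2 := by
      rw [div_le_div_iff₀ (by positivity) (by positivity)]
      have : K * ω * b ≤ K * ω * |b| := by gcongr; exact le_abs_self b
      nlinarith [pow_le_pow_right₀ hn (show 2 ≤ 3 by norm_num), (by positivity : 0 ≤ K * ω * |b|)]
    calc b / n * E = b / n + -(γ * j * b) / n ^ 2 + K * ω * b / n ^ 3 := by
          simp only [E]; field_simp; ring
      _ ≤ b / n + |γ| * ω * |b| / n ^ 2 + K * ω * |b| / n ^ 2 := by gcongr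
      _ = _ := by ring
  have hc : c * E ≤ (1 + |γ| + K) * (|c| * ω) :=
    calc c * E ≤ |c| * |E| := by rw [← abs_mul]; exact le_abs_self _
      _ ≤ |c| * ((1 + |γ| + K) * ω) := by gcongr
      _ = _ := by ring
  have ha' : a * E ≤ a + -(γ * j * a) / n + (K + |γ|) * ω * a / n ^ 2 := by
    have : a * E = a + -(γ * j * a) / n + K * ω * a / n ^ 2 := by simp only [E]; ring
    rw [this]; gcongr; linarith [abs_nonneg γ]
  calc (a + b / n + c) * q ≤ (a + b / n + c) * E := mul_le_mul_of_nonneg_left hq hw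
    _ = a * E + b / n * E + c * E := by ring
    _ ≤ _ := by
      have : (b - γ * j * a) / n + (K + |γ|) * ((a + |b|) * ω) / n ^ 2 =
          b / n + -(γ * j * a) / n + (K + |γ|) * ω * a / n ^ 2 + (|γ| + K) * ω * |b| / n ^ 2 := by
        ring
      linarith

theorem sum_add_div_add_mul_le {a b c q : ℕ → ℝ} {γ K p : ℝ} {n : ℕ} (hn : 1 ≤ n) (hp : 1 ≤ p)
    (hK : 0 ≤ K) (ha_nn : ∀ j, 1 ≤ j → 0 ≤ a j) (hw : ∀ j ∈ Ico 1 n, 0 ≤ a j + b j / n + c j)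
    (hq : ∀ j ∈ Ico 1 n, q j ≤ 1 - γ * j / n + K * (j : ℝ) ^ p / n ^ 2) :
    ∑ j ∈ Ico 1 n, (a j + b j / n + c j) * q j ≤
      ∑ j ∈ Ico 1 n, a j + (∑ j ∈ Ico 1 n, (b j - γ * j * a j)) / n
        + (K + |γ|) * (∑ j ∈ Ico 1 n, (a j + |b j|) * (j : ℝ) ^ p) / n ^ 2
        + (1 + |γ| + K) * ∑ j ∈ Ico 1 n, |c j| * (j : ℝ) ^ p := by
  calc ∑ j ∈ Ico 1 n, (a j + b j / n + c j) * q j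
      ≤ ∑ j ∈ Ico 1 n, (a j + (b j - γ * j * a j) / n
          + (K + |γ|) * ((a j + |b j|) * (j : ℝ) ^ p) / n ^ 2
          + (1 + |γ| + K) * (|c j| * (j : ℝ) ^ p)) := by
        gcongr with j hj
        obtain ⟨hj1, hjn⟩ := mem_Ico.1 hj
        have hj1' : (1 : ℝ) ≤ j := by exact_mod_cast hj1
        exact add_div_add_mul_le_of_le_one_sub (by exact_mod_cast hn) j.cast_nonneg
          (by exact_mod_cast hjn.le) (Real.self_le_rpow_of_one_le hj1' hp)
          (Real.one_le_rpow hj1' (by linarith)) hK (ha_nn j hj1) (hw j hj) (hq j hj)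
    _ = _ := by simp only [sum_add_distrib, sum_div, mul_sum]

theorem exists_sum_weight_mul_rpow_le {a b : ℕ → ℝ} {c : ℕ → ℕ → ℝ} {z γ : ℝ} (hz : 1 < z)
    (ha_nn : ∀ n, 1 ≤ n → 0 ≤ a n) (ha_one : ∑' n, a (n + 1) = 1)
    (haz : Summable fun n : ℕ => a (n + 1) * z ^ (n + 1))
    (hbz : Summable fun n : ℕ => |b (n + 1)| * z ^ (n + 1))
    (hγ : γ = (∑' n : ℕ, b (n + 1)) / ∑' n : ℕ, ((n : ℝ) + 1) * a (n + 1)) :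
    ∃ K₀ K₁ : ℝ, 0 ≤ K₀ ∧ 0 ≤ K₁ ∧ ∀ n : ℕ, 1 ≤ n →
      (∀ j ∈ Ico 1 n, 0 ≤ a j + b j / n + c n j) →
      ∑ j ∈ Ico 1 n, (a j + b j / n + c n j) * (((n - j : ℕ) : ℝ) ^ γ * (n : ℝ) ^ (-γ))
        ≤ 1 + K₀ / n ^ 2 + K₁ * ∑ j ∈ Ico 1 n, |c n j| * z ^ j := by
  have ha_sum : Summable fun k => a (k + 1) := by
    simpa only [Real.rpow_zero, mul_one] using summable_mul_rpow_of_summable_mul_pow hz haz 0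
  have hb_sum : Summable fun k => b (k + 1) := Summable.of_abs <| by
    simpa only [Real.rpow_zero, mul_one] using
      summable_mul_rpow_of_summable_mul_pow (f := (|b ·|)) hz hbz 0
  have hf0 := tsum_sub_mul_eq_zero ha_nn ha_one ha_sum (by
    simpa only [Real.rpow_one, Nat.cast_succ, mul_comm] using
      summable_mul_rpow_of_summable_mul_pow hz haz 1) hb_sum hγ
  have hf_sum := summable_mul_abs_sub_mul γ ha_nn
    (by simpa only [Real.rpow_two, Nat.cast_succ, mul_comm] using
      summable_mul_rpow_of_summable_mul_pow hz haz 2)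
    (by simpa only [Real.rpow_one, Nat.cast_succ, mul_comm] using
      summable_mul_rpow_of_summable_mul_pow (f := (|b ·|)) hz hbz 1)
  set p := |γ| + 2
  have hab : Summable fun k : ℕ => (a (k + 1) + |b (k + 1)|) * ((k + 1 : ℕ) : ℝ) ^ p := by
    simpa only [add_mul] using (summable_mul_rpow_of_summable_mul_pow hz haz p).add
      (summable_mul_rpow_of_summable_mul_pow (f := (|b ·|)) hz hbz p)
  have hab_nn : ∀ j, 1 ≤ j → 0 ≤ (a j + |b j|) * (j : ℝ) ^ p := fun j hj =>
    mul_nonneg (add_nonneg (ha_nn j hj) (abs_nonneg _)) (by positivity)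
  obtain ⟨K, hK, hkernel⟩ := exists_natCast_sub_rpow_mul_le γ
  obtain ⟨Kz, hKz, hpow⟩ := exists_rpow_le_mul_pow p hz
  refine ⟨∑' k : ℕ, ((k : ℝ) + 1) * |b (k + 1) - γ * ((k + 1 : ℕ) : ℝ) * a (k + 1)| +
    (K + |γ|) * ∑' k : ℕ, (a (k + 1) + |b (k + 1)|) * ((k + 1 : ℕ) : ℝ) ^ p, (1 + |γ| + K) * Kz,
    add_nonneg (tsum_nonneg fun k => by positivity) (mul_nonneg (by positivity)
      (tsum_nonneg fun k => hab_nn _ k.succ_pos)), by positivity, fun n hn hw => ?_⟩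
  refine (sum_add_div_add_mul_le hn (le_add_of_nonneg_of_le (abs_nonneg γ) one_le_two) hK ha_nn hw
    fun j hj => hkernel n j (mem_Ico.1 hj).1 (mem_Ico.1 hj).2).trans ?_
  have hc : ∑ j ∈ Ico 1 n, |c n j| * (j : ℝ) ^ p ≤ Kz * ∑ j ∈ Ico 1 n, |c n j| * z ^ j := by
    rw [mul_sum]
    refine sum_le_sum fun j _ => ?_
    calc |c n j| * (j : ℝ) ^ p ≤ |c n j| * (Kz * z ^ j) := by gcongr; exact hpow j
      _ = Kz * (|c n j| * z ^ j) := by ring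
  calc _ ≤ 1 + (∑' k : ℕ, ((k : ℝ) + 1) * |b (k + 1) - γ * ((k + 1 : ℕ) : ℝ) * a (k + 1)|) / n ^ 2
          + (K + |γ|) * (∑' k : ℕ, (a (k + 1) + |b (k + 1)|) * ((k + 1 : ℕ) : ℝ) ^ p) / n ^ 2
          + (1 + |γ| + K) * (Kz * ∑ j ∈ Ico 1 n, |c n j| * z ^ j) := by
        gcongr ?_ + ?_ + _ * ?_ / _ + _ * ?_
        · exact (sum_Ico_one_le_tsum (f := a) ha_sum ha_nn n).trans ha_one.le
        · exact sum_Ico_one_div_le_tsum (f := fun j => b j - γ * j * a j) hf_sum hf0 hn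
        · exact sum_Ico_one_le_tsum (f := fun j => (a j + |b j|) * (j : ℝ) ^ p) hab hab_nn n
    _ = _ := by ring

theorem exists_le_of_le_sum_mul_add {y s D : ℕ → ℝ} {q : ℕ → ℕ → ℝ}
    (hq : ∀ n, ∀ j ∈ Ico 1 n, 0 ≤ q n j) (hs : ∀ n, 0 ≤ s n) (hD : ∀ n, 0 ≤ D n)
    (hs_sum : Summable s) (hD_sum : Summable D)
    (hqD : ∀ n, 1 ≤ n → ∑ j ∈ Ico 1 n, q n j ≤ 1 + D n)
    (hy : ∀ n, 1 ≤ n → y n ≤ ∑ j ∈ Ico 1 n, q n j * y (n - j) + s n) :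
    ∃ M, ∀ n, 1 ≤ n → y n ≤ M := by
  set T : ℕ → ℝ := fun n => ∑ k ∈ range (n + 1), s k
  set U : ℕ → ℝ := fun n => ∑ k ∈ range (n + 1), D k
  have hT : ∀ n, 0 ≤ T n := fun n => sum_nonneg fun k _ => hs k
  have hU : ∀ n, 0 ≤ U n := fun n => sum_nonneg fun k _ => hD k
  have hP_succ : ∀ n, T n * Real.exp (U n) ≤ T (n + 1) * Real.exp (U (n + 1)) := by
    intro n
    have := hT n
    have := hs (n + 1)
    have := hD (n + 1)
    simp only [T, U, sum_range_succ _ (n + 1)] at *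
    gcongr <;> linarith
  have hbound : ∀ n k, 1 ≤ k → k ≤ n → y k ≤ T n * Real.exp (U n) := by
    intro n
    induction n with
    | zero => intro k hk hk0; omega
    | succ n ih =>
      intro k hk hkn
      rcases Nat.lt_or_eq_of_le hkn with hkn | rfl
      · exact (ih k hk (by omega)).trans (hP_succ n)
      have hP0 : 0 ≤ T n * Real.exp (U n) := mul_nonneg (hT n) (Real.exp_pos _).le
      calc y (n + 1) ≤ ∑ j ∈ Ico 1 (n + 1), q (n + 1) j * y (n + 1 - j) + s (n + 1) := hy _ hk
        _ ≤ ∑ j ∈ Ico 1 (n + 1), q (n + 1) j * (T n * Real.exp (U n)) + s (n + 1) := by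
          gcongr with j hj
          · exact hq _ j hj
          · have := mem_Ico.1 hj; exact ih _ (by omega) (by omega)
        _ ≤ (1 + D (n + 1)) * (T n * Real.exp (U n)) + s (n + 1) := by
          rw [← sum_mul]; gcongr; exact hqD _ hk
        _ ≤ Real.exp (D (n + 1)) * (T n * Real.exp (U n)) + s (n + 1) * Real.exp (U (n + 1)) := by
          gcongr
          · linarith [Real.add_one_le_exp (D (n + 1))]
          · exact le_mul_of_one_le_right (hs _) (Real.one_le_exp (hU _))
        _ = T (n + 1) * Real.exp (U (n + 1)) := by
          simp only [T, U, sum_range_succ _ (n + 1), Real.exp_add]; ring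
  refine ⟨(∑' k, s k) * Real.exp (∑' k, D k), fun n hn => (hbound n n hn le_rfl).trans ?_⟩
  gcongr
  · exact tsum_nonneg hs
  · exact hs_sum.sum_le_tsum _ fun k _ => hs k
  · exact hD_sum.sum_le_tsum _ fun k _ => hD k

theorem mul_rpow_neg_eq_sum_add {x r : ℕ → ℝ} {w : ℕ → ℕ → ℝ} (γ : ℝ) {n : ℕ}
    (h : x n = ∑ j ∈ Ico 1 n, w n j * x (n - j) + r n) :
    x n * (n : ℝ) ^ (-γ) = ∑ j ∈ Ico 1 n, w n j * (((n - j : ℕ) : ℝ) ^ γ * (n : ℝ) ^ (-γ)) *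
      (x (n - j) * ((n - j : ℕ) : ℝ) ^ (-γ)) + r n * (n : ℝ) ^ (-γ) := by
  rw [h, add_mul, sum_mul]
  congr 1
  refine sum_congr rfl fun j hj => ?_
  have hnj : (0 : ℝ) < (n - j : ℕ) := by have := mem_Ico.1 hj; exact_mod_cast (by omega : 0 < n - j)
  rw [Real.rpow_neg hnj.le]
  field_simp

theorem discrete_renewal_bounded_above_general
    (a b r : ℕ → ℝ) (c : ℕ → ℕ → ℝ) (x : ℕ → ℝ) (w : ℕ → ℕ → ℝ)
    (hw : ∀ n j : ℕ, w n j = a j + b j / (n : ℝ) + c n j)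
    (hwnn : ∀ n : ℕ, ∀ j ∈ Finset.Ico 1 n, 0 ≤ w n j)
    (hrec : ∀ n : ℕ, 1 ≤ n → x n = (∑ j ∈ Finset.Ico 1 n, w n j * x (n - j)) + r n)
    -- (r1), normalized
    (ha_nn : ∀ n : ℕ, 1 ≤ n → 0 ≤ a n)
    (ha_one : ∑' n : ℕ, a (n + 1) = 1)
    -- (r2)
    (hr_nn : ∀ n : ℕ, 0 ≤ r n)
    -- (r3), normalized with z > 1
    (z : ℝ) (hz : 1 < z)
    (haz : Summable fun n : ℕ => a (n + 1) * z ^ (n + 1))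
    (hbz : Summable fun n : ℕ => |b (n + 1)| * z ^ (n + 1))
    (hcz : Summable fun n : ℕ => ∑ j ∈ Finset.Ico 1 n, |c n j| * z ^ j)
    (hrz : Summable fun n : ℕ => r (n + 1) * z ^ (n + 1))
    (γ : ℝ)
    (hγ : γ = (∑' n : ℕ, b (n + 1)) / (∑' n : ℕ, ((n : ℝ) + 1) * a (n + 1))) :
    ∃ M : ℝ, ∀ n : ℕ, 1 ≤ n → x n * (n : ℝ) ^ (-γ) ≤ M := by
  obtain rfl : w = fun n j => a j + b j / n + c n j := funext₂ hw
  obtain ⟨K₀, K₁, hK₀, hK₁, hS⟩ := exists_sum_weight_mul_rpow_le (c := c) hz ha_nn ha_one haz hbz hγ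
  refine exists_le_of_le_sum_mul_add (s := fun n => r n * (n : ℝ) ^ (-γ))
    (q := fun n j => (a j + b j / n + c n j) * (((n - j : ℕ) : ℝ) ^ γ * (n : ℝ) ^ (-γ)))
    (D := fun n => K₀ / n ^ 2 + K₁ * ∑ j ∈ Ico 1 n, |c n j| * z ^ j)
    (fun n j hj => mul_nonneg (hwnn n j hj) (by positivity))
    (fun n => mul_nonneg (hr_nn n) (by positivity)) (fun n => by positivity)
    ((summable_nat_add_iff 1).1 (summable_mul_rpow_of_summable_mul_pow hz hrz (-γ))) ?_
    (fun n hn => ?_) (fun n hn => ?_)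
  · simpa only [one_div, div_eq_mul_inv, one_mul, mul_comm K₀] using
      ((Real.summable_one_div_nat_pow.2 one_lt_two).mul_right K₀).add (hcz.mul_left K₁)
  · rw [← add_assoc]; exact hS n hn (hwnn n)
  · exact (mul_rpow_neg_eq_sum_add (w := fun n j => a j + b j / n + c n j) γ (hrec n hn)).le

/-- Lemma 3.3 of the paper (normalized case `∑ a_n = 1`, `z > 1`):
the sequence `y n = x n * n ^ (-γ)` is bounded from above. -/
theorem discrete_renewal_bounded_above
    (a b r : ℕ → ℝ) (c : ℕ → ℕ → ℝ) (x : ℕ → ℝ) (w : ℕ → ℕ → ℝ)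
    (hw : ∀ n j : ℕ, w n j = a j + b j / (n : ℝ) + c n j)
    (hwnn : ∀ n : ℕ, ∀ j ∈ Finset.Ico 1 n, 0 ≤ w n j)
    (hrec : ∀ n : ℕ, 1 ≤ n → x n = (∑ j ∈ Finset.Ico 1 n, w n j * x (n - j)) + r n)
    -- (r1), normalized
    (ha_nn : ∀ n : ℕ, 1 ≤ n → 0 ≤ a n)
    (hgcd : ∀ d : ℕ, (∀ n : ℕ, 1 ≤ n → 0 < a n → d ∣ n) → d = 1)
    (ha_one : ∑' n : ℕ, a (n + 1) = 1)
    -- (r2)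
    (hr_nn : ∀ n : ℕ, 0 ≤ r n)
    (hr_pos : ∃ n : ℕ, 0 < r n)
    -- (r3), normalized with z > 1
    (z : ℝ) (hz : 1 < z)
    (haz : Summable fun n : ℕ => a (n + 1) * z ^ (n + 1))
    (hbz : Summable fun n : ℕ => |b (n + 1)| * z ^ (n + 1))
    (hcz : Summable fun n : ℕ => ∑ j ∈ Finset.Ico 1 n, |c n j| * z ^ j)
    (hrz : Summable fun n : ℕ => r (n + 1) * z ^ (n + 1))
    (γ : ℝ)
    (hγ : γ = (∑' n : ℕ, b (n + 1)) / (∑' n : ℕ, ((n : ℝ) + 1) * a (n + 1))) :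
    ∃ M : ℝ, ∀ n : ℕ, 1 ≤ n → x n * (n : ℝ) ^ (-γ) ≤ M :=
  discrete_renewal_bounded_above_general a b r c x w hw hwnn hrec ha_nn ha_one hr_nn z hz haz hbz
    hcz hrz γ hγ
end

section
/- Assume the normalized conditions: (r1)–(r3) hold with Σ_{n=1}^∞ a_n = 1 and z > 1, and set γ = (Σ_{n=1}^∞ b_n)/(Σ_{n=1}^∞ n a_n). Then Σ_{j=1}^{n-1} | w_{n,j} (1 − j/n)^γ − a_j | → 0 as n → ∞, where w_{n,j} = a_j + b_j/n + c_{n,j}. -/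
open Filter Finset Topology

/-! For `j < n` put `x = 1 - j / n ∈ (0, 1]`. Since `x⁻¹ ≤ j + 1`, we get `x ^ γ ≤ (j + 1) ^ |γ|`,
a polynomial weight dominated by the exponential moments `z ^ j`. Writing
`w x ^ γ - a = a (x ^ γ - 1) + (b / n + c) x ^ γ`, the `a`-part tends to zero by dominated
convergence (`x ^ γ → 1` for fixed `j`, with the summable majorant `2 |a j| (j + 1) ^ |γ|`),
the `b`-part is `O(1 / n)`, and the `c`-part is bounded by a multiple of the general term of a
convergent series. -/

lemma exists_add_one_rpow_le_mul_pow (s : ℝ) {z : ℝ} (hz : 1 < z) :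
    ∃ M, ∀ j : ℕ, ((j : ℝ) + 1) ^ s ≤ M * z ^ j := by
  obtain ⟨M, hM⟩ := (tendsto_pow_const_div_const_pow_of_one_lt ⌈s⌉₊ hz).bddAbove_range
  refine ⟨M * z, fun j => ?_⟩
  have hk : ((j + 1 : ℕ) : ℝ) ^ ⌈s⌉₊ ≤ M * z ^ (j + 1) :=
    (div_le_iff₀ (by positivity)).mp (hM ⟨j + 1, rfl⟩)
  calc ((j : ℝ) + 1) ^ s ≤ ((j : ℝ) + 1) ^ (⌈s⌉₊ : ℝ) :=
        Real.rpow_le_rpow_of_exponent_le (by linarith [j.cast_nonneg (α := ℝ)]) (Nat.le_ceil s)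
    _ = ((j + 1 : ℕ) : ℝ) ^ ⌈s⌉₊ := by push_cast; exact Real.rpow_natCast _ _
    _ ≤ M * z ^ (j + 1) := hk
    _ = M * z * z ^ j := by ring

lemma summable_abs_mul_add_one_rpow (s : ℝ) {z : ℝ} (hz : 1 < z) {f : ℕ → ℝ}
    (hf : Summable fun j => |f j| * z ^ j) :
    Summable fun j => |f j| * ((j : ℝ) + 1) ^ s := by
  obtain ⟨M, hM⟩ := exists_add_one_rpow_le_mul_pow s hz
  refine (hf.mul_left M).of_nonneg_of_le (fun j => by positivity) fun j => ?_
  calc |f j| * ((j : ℝ) + 1) ^ s ≤ |f j| * (M * z ^ j) :=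
        mul_le_mul_of_nonneg_left (hM j) (abs_nonneg _)
    _ = M * (|f j| * z ^ j) := by ring

lemma tendsto_sum_abs_mul_add_one_rpow_of_summable (s : ℝ) {z : ℝ} (hz : 1 < z)
    {c : ℕ → ℕ → ℝ} {t : ℕ → Finset ℕ} (hc : Summable fun n => ∑ j ∈ t n, |c n j| * z ^ j) :
    Tendsto (fun n => ∑ j ∈ t n, |c n j| * ((j : ℝ) + 1) ^ s) atTop (𝓝 0) := by
  obtain ⟨M, hM⟩ := exists_add_one_rpow_le_mul_pow s hz
  have hbound (n : ℕ) :
      ∑ j ∈ t n, |c n j| * ((j : ℝ) + 1) ^ s ≤ M * ∑ j ∈ t n, |c n j| * z ^ j := by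
    rw [mul_sum]
    exact sum_le_sum fun j _ => by nlinarith [hM j, abs_nonneg (c n j)]
  refine squeeze_zero (fun n => sum_nonneg fun j _ => by positivity) hbound ?_
  simpa using hc.tendsto_atTop_zero.const_mul M

lemma one_sub_natCast_div_pos {j n : ℕ} (hjn : j < n) : 0 < 1 - (j : ℝ) / n := by
  have hn : (0 : ℝ) < n := by exact_mod_cast j.zero_le.trans_lt hjn
  exact sub_pos.2 ((div_lt_one hn).2 (by exact_mod_cast hjn))

lemma inv_one_sub_natCast_div_le {j n : ℕ} (hjn : j < n) : (1 - (j : ℝ) / n)⁻¹ ≤ j + 1 := by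
  have hn : (0 : ℝ) < n := by exact_mod_cast j.zero_le.trans_lt hjn
  have hjn' : (j : ℝ) + 1 ≤ n := by exact_mod_cast hjn
  have h : ((j : ℝ) + 1) * (1 - j / n) = (j + 1) * (n - j) / n := by field_simp
  rw [inv_le_iff_one_le_mul₀ (one_sub_natCast_div_pos hjn), h, le_div_iff₀ hn, one_mul]
  -- `n ≤ (j + 1) (n - j)` is `0 ≤ j (n - j - 1)`
  nlinarith [mul_nonneg j.cast_nonneg (sub_nonneg.2 hjn')]

lemma one_sub_natCast_div_rpow_le {j n : ℕ} (hjn : j < n) (γ : ℝ) :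
    (1 - (j : ℝ) / n) ^ γ ≤ ((j : ℝ) + 1) ^ |γ| := by
  have hx := one_sub_natCast_div_pos hjn
  have hx1 : 1 - (j : ℝ) / n ≤ 1 := sub_le_self _ (by positivity)
  calc (1 - (j : ℝ) / n) ^ γ ≤ (1 - (j : ℝ) / n) ^ (-|γ|) :=
        Real.rpow_le_rpow_of_exponent_ge hx hx1 (neg_abs_le γ)
    _ = (1 - (j : ℝ) / n)⁻¹ ^ |γ| := by rw [Real.rpow_neg hx.le, Real.inv_rpow hx.le]
    _ ≤ ((j : ℝ) + 1) ^ |γ| :=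
        Real.rpow_le_rpow (inv_nonneg.2 hx.le) (inv_one_sub_natCast_div_le hjn) (abs_nonneg γ)

lemma tendsto_one_sub_natCast_div_rpow (j : ℕ) (γ : ℝ) :
    Tendsto (fun n : ℕ => (1 - (j : ℝ) / n) ^ γ) atTop (𝓝 1) := by
  have h := ((tendsto_const_div_atTop_nhds_zero_nat (j : ℝ)).const_sub 1).rpow_const
    (p := γ) (Or.inl (by norm_num))
  simpa using h

lemma tendsto_sum_abs_mul_abs_one_sub_div_rpow_sub_one {a : ℕ → ℝ} {γ : ℝ}
    (ha : Summable fun j => |a j| * ((j : ℝ) + 1) ^ |γ|) :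
    Tendsto (fun n : ℕ => ∑ j ∈ range n, |a j| * |(1 - (j : ℝ) / n) ^ γ - 1|) atTop (𝓝 0) := by
  set F : ℕ → ℕ → ℝ := fun n =>
    (range n : Set ℕ).indicator fun j => |a j| * |(1 - (j : ℝ) / n) ^ γ - 1|
  have hlim (j : ℕ) : Tendsto (F · j) atTop (𝓝 0) := by
    have h := (((tendsto_one_sub_natCast_div_rpow j γ).sub_const 1).abs.const_mul |a j|)
    rw [sub_self, abs_zero, mul_zero] at h
    refine h.congr' ?_
    filter_upwards [eventually_gt_atTop j] with n hn
    simp [F, hn]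
  have hdom (n j : ℕ) : ‖F n j‖ ≤ 2 * (|a j| * ((j : ℝ) + 1) ^ |γ|) := by
    by_cases hj : j < n
    · have hx := (one_sub_natCast_div_pos hj).le
      have hρ : 1 ≤ ((j : ℝ) + 1) ^ |γ| :=
        Real.one_le_rpow (by linarith [j.cast_nonneg (α := ℝ)]) (abs_nonneg γ)
      have hdiff : |(1 - (j : ℝ) / n) ^ γ - 1| ≤ 2 * ((j : ℝ) + 1) ^ |γ| := by
        rw [abs_le]
        constructor <;> linarith [Real.rpow_nonneg hx γ, one_sub_natCast_div_rpow_le hj γ]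
      simp only [F, Set.indicator_of_mem (Finset.mem_coe.2 (mem_range.2 hj)), Real.norm_eq_abs,
        abs_mul, abs_abs]
      nlinarith [abs_nonneg (a j)]
    · have hj' : j ∉ (range n : Set ℕ) := by simpa using hj
      rw [show F n j = 0 from Set.indicator_of_notMem hj' _, norm_zero]
      positivity
  have h := tendsto_tsum_of_dominated_convergence (ha.mul_left 2) hlim
    (Eventually.of_forall hdom)
  simpa only [F, tsum_zero, ← sum_eq_tsum_indicator] using h

theorem tendsto_sum_abs_perturbed_mul_one_sub_div_rpow_sub {a b : ℕ → ℝ} {c : ℕ → ℕ → ℝ}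
    {γ : ℝ} (ha : Summable fun j => |a j| * ((j : ℝ) + 1) ^ |γ|)
    (hb : Summable fun j => |b j| * ((j : ℝ) + 1) ^ |γ|)
    (hc : Tendsto (fun n => ∑ j ∈ Ico 1 n, |c n j| * ((j : ℝ) + 1) ^ |γ|) atTop (𝓝 0)) :
    Tendsto (fun n : ℕ => ∑ j ∈ Ico 1 n,
      |(a j + b j / n + c n j) * (1 - (j : ℝ) / n) ^ γ - a j|) atTop (𝓝 0) := by
  set ρ : ℕ → ℝ := fun j => ((j : ℝ) + 1) ^ |γ|
  have hterm (n j : ℕ) (hj : j < n) :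
      |(a j + b j / n + c n j) * (1 - (j : ℝ) / n) ^ γ - a j|
        ≤ |a j| * |(1 - (j : ℝ) / n) ^ γ - 1| + |b j| * ρ j / n + |c n j| * ρ j := by
    set x := (1 - (j : ℝ) / n) ^ γ
    have hx : 0 ≤ x := Real.rpow_nonneg (one_sub_natCast_div_pos hj).le γ
    have hxρ : x ≤ ρ j := one_sub_natCast_div_rpow_le hj γ
    calc |(a j + b j / n + c n j) * x - a j| = |a j * (x - 1) + (b j / n + c n j) * x| := by
          ring_nf
      _ ≤ |a j| * |x - 1| + |b j / n + c n j| * x := by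
          grw [abs_add_le, abs_mul, abs_mul, abs_of_nonneg hx]
      _ ≤ |a j| * |x - 1| + (|b j| / n + |c n j|) * ρ j := by
          gcongr
          exact (abs_add_le _ _).trans_eq (by rw [abs_div, Nat.abs_cast])
      _ = |a j| * |x - 1| + |b j| * ρ j / n + |c n j| * ρ j := by ring
  have hbound (n : ℕ) : ∑ j ∈ Ico 1 n, |(a j + b j / n + c n j) * (1 - (j : ℝ) / n) ^ γ - a j|
      ≤ ∑ j ∈ range n, |a j| * |(1 - (j : ℝ) / n) ^ γ - 1| + (∑' j, |b j| * ρ j) / n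
        + ∑ j ∈ Ico 1 n, |c n j| * ρ j := by
    calc _ ≤ ∑ j ∈ Ico 1 n,
          (|a j| * |(1 - (j : ℝ) / n) ^ γ - 1| + |b j| * ρ j / n + |c n j| * ρ j) :=
          sum_le_sum fun j hj => hterm n j (mem_Ico.1 hj).2
      _ = ∑ j ∈ Ico 1 n, |a j| * |(1 - (j : ℝ) / n) ^ γ - 1|
          + (∑ j ∈ Ico 1 n, |b j| * ρ j) / n + ∑ j ∈ Ico 1 n, |c n j| * ρ j := by
          rw [sum_add_distrib, sum_add_distrib, sum_div]
      _ ≤ _ := by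
          gcongr
          · exact fun j hj => mem_range.2 (mem_Ico.1 hj).2
          · exact hb.sum_le_tsum _ fun j _ => by positivity
  refine squeeze_zero (fun n => sum_nonneg fun j _ => abs_nonneg _) hbound ?_
  simpa using ((tendsto_sum_abs_mul_abs_one_sub_div_rpow_sub_one ha).add
    (tendsto_const_div_atTop_nhds_zero_nat _)).add hc

theorem discrete_renewal_error_tendsto_zero_general
    (a b : ℕ → ℝ) (c : ℕ → ℕ → ℝ) (w : ℕ → ℕ → ℝ)
    (hw : ∀ n j : ℕ, w n j = a j + b j / (n : ℝ) + c n j)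
    -- (r1), normalized
    (ha_nn : ∀ n : ℕ, 1 ≤ n → 0 ≤ a n)
    -- (r3), normalized with z > 1
    (z : ℝ) (hz : 1 < z)
    (haz : Summable fun n : ℕ => a (n + 1) * z ^ (n + 1))
    (hbz : Summable fun n : ℕ => |b (n + 1)| * z ^ (n + 1))
    (hcz : Summable fun n : ℕ => ∑ j ∈ Finset.Ico 1 n, |c n j| * z ^ j)
    (γ : ℝ) :
    Filter.Tendsto
      (fun n : ℕ => ∑ j ∈ Finset.Ico 1 n,
        |w n j * ((1 : ℝ) - (j : ℝ) / (n : ℝ)) ^ γ - a j|)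
      Filter.atTop (nhds 0) := by
  have haz' : Summable fun j => |a j| * z ^ j := by
    refine (summable_nat_add_iff 1).1 (haz.congr fun n => ?_)
    rw [abs_of_nonneg (ha_nn (n + 1) (Nat.le_add_left 1 n))]
  have hbz' : Summable fun j => |b j| * z ^ j := (summable_nat_add_iff 1).1 hbz
  simp_rw [hw]
  exact tendsto_sum_abs_perturbed_mul_one_sub_div_rpow_sub
    (summable_abs_mul_add_one_rpow |γ| hz haz') (summable_abs_mul_add_one_rpow |γ| hz hbz')
    (tendsto_sum_abs_mul_add_one_rpow_of_summable |γ| hz hcz)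

/-- Equation (3.9)-type statement of the paper (normalized case `∑ a_n = 1`, `z > 1`):
`∑_{j=1}^{n-1} | w n j * (1 - j/n)^γ - a j | → 0` as `n → ∞`. -/
theorem discrete_renewal_error_tendsto_zero
    (a b : ℕ → ℝ) (c : ℕ → ℕ → ℝ) (w : ℕ → ℕ → ℝ)
    (hw : ∀ n j : ℕ, w n j = a j + b j / (n : ℝ) + c n j)
    (hwnn : ∀ n : ℕ, ∀ j ∈ Finset.Ico 1 n, 0 ≤ w n j)
    -- (r1), normalized
    (ha_nn : ∀ n : ℕ, 1 ≤ n → 0 ≤ a n)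
    (hgcd : ∀ d : ℕ, (∀ n : ℕ, 1 ≤ n → 0 < a n → d ∣ n) → d = 1)
    (ha_one : ∑' n : ℕ, a (n + 1) = 1)
    -- (r3), normalized with z > 1
    (z : ℝ) (hz : 1 < z)
    (haz : Summable fun n : ℕ => a (n + 1) * z ^ (n + 1))
    (hbz : Summable fun n : ℕ => |b (n + 1)| * z ^ (n + 1))
    (hcz : Summable fun n : ℕ => ∑ j ∈ Finset.Ico 1 n, |c n j| * z ^ j)
    (γ : ℝ)
    (hγ : γ = (∑' n : ℕ, b (n + 1)) / (∑' n : ℕ, ((n : ℝ) + 1) * a (n + 1))) :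
    Filter.Tendsto
      (fun n : ℕ => ∑ j ∈ Finset.Ico 1 n,
        |w n j * ((1 : ℝ) - (j : ℝ) / (n : ℝ)) ^ γ - a j|)
      Filter.atTop (nhds 0) :=
  discrete_renewal_error_tendsto_zero_general a b c w hw ha_nn z hz haz hbz hcz γ
end

section
/- Let (a_j) be a sequence with a_j ≥ 0 for all j ≥ 1, Σ_{j=1}^∞ a_j = 1 and Σ_{j=1}^∞ j a_j < ∞, and define y_n = 2 + sin(log(1+n)) for n ≥ 1. Then y_n − Σ_{j=1}^{n-1} a_j y_{n-j} → 0 as n → ∞, yet the sequence (y_n) does not converge. -/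
/-!
For each fixed `m`, `log (1 + n) - log (1 + (n - m)) → 0`, and `sin` is 1-Lipschitz, so every
fixed shift `y n - y (n - m)` tends to zero; since `y` is bounded and `∑ a_j = 1`, dominated
convergence in `j` gives the first claim. On the other hand, along `n_k = ⌊exp (c + 2πk)⌋₊` one has
`log (1 + n_k) = c + 2πk + o(1)`, so `sin (log (1 + n_k)) → sin c` for every `c`, and `y` has both
`1` and `3` as limit points.
-/

open Real Filter Finset Topology

section Renewal

variable {a y : ℕ → ℝ}

lemma sub_sum_Ico_mul_eq_tsum (ha_sum : Summable fun j => a (j + 1))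
    (ha_one : ∑' j, a (j + 1) = 1) (n : ℕ) :
    y n - ∑ j ∈ Ico 1 n, a j * y (n - j) =
      ∑' j, (a (j + 1) * y n -
        (↑(range (n - 1)) : Set ℕ).indicator (fun j => a (j + 1) * y (n - (j + 1))) j) := by
  have h_ind : Summable ((↑(range (n - 1)) : Set ℕ).indicator
      fun j => a (j + 1) * y (n - (j + 1))) :=
    summable_of_ne_finset_zero (s := range (n - 1)) fun j hj => Set.indicator_of_notMem hj _
  rw [(ha_sum.mul_right (y n)).tsum_sub h_ind, tsum_mul_right, ha_one, one_mul,
    ← sum_eq_tsum_indicator, sum_Ico_eq_sum_range]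
  simp only [add_comm 1]

lemma tendsto_sub_sum_Ico_mul_of_tendsto_sub_shift (ha_nn : ∀ j, 1 ≤ j → 0 ≤ a j)
    (ha_sum : Summable fun j => a (j + 1)) (ha_one : ∑' j, a (j + 1) = 1)
    {C : ℝ} (hy_bdd : ∀ n, |y n| ≤ C)
    (hy_shift : ∀ m, Tendsto (fun n => y n - y (n - m)) atTop (𝓝 0)) :
    Tendsto (fun n => y n - ∑ j ∈ Ico 1 n, a j * y (n - j)) atTop (𝓝 0) := by
  simp_rw [sub_sum_Ico_mul_eq_tsum (y := y) ha_sum ha_one]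
  rw [← tsum_zero]
  refine tendsto_tsum_of_dominated_convergence (ha_sum.mul_left (2 * C)) (fun j => ?_) ?_
  · have h_eq : ∀ᶠ n in atTop, a (j + 1) * (y n - y (n - (j + 1))) = a (j + 1) * y n -
        (↑(range (n - 1)) : Set ℕ).indicator (fun j => a (j + 1) * y (n - (j + 1))) j := by
      filter_upwards [eventually_gt_atTop (j + 1)] with n hn
      rw [Set.indicator_of_mem (by simp only [coe_range, Set.mem_Iio]; omega), mul_sub]
    simpa using ((hy_shift (j + 1)).const_mul (a (j + 1))).congr' h_eq
  · refine Eventually.of_forall fun n j => ?_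
    have ha := ha_nn (j + 1) (by omega)
    have h_term : ∀ m, ‖a (j + 1) * y m‖ ≤ C * a (j + 1) := fun m => by
      rw [norm_mul, Real.norm_of_nonneg ha, mul_comm]
      exact mul_le_mul_of_nonneg_right (hy_bdd m) ha
    calc _ ≤ ‖a (j + 1) * y n‖ + ‖(↑(range (n - 1)) : Set ℕ).indicator
            (fun j => a (j + 1) * y (n - (j + 1))) j‖ := norm_sub_le _ _
      _ ≤ C * a (j + 1) + C * a (j + 1) :=
          add_le_add (h_term n) ((norm_indicator_le_norm_self _ _).trans (h_term _))
      _ = 2 * C * a (j + 1) := by ring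

end Renewal

lemma tendsto_log_one_add_sub_log_one_add_sub (m : ℕ) :
    Tendsto (fun n : ℕ => log (1 + n) - log (1 + (n - m : ℕ))) atTop (𝓝 0) := by
  have h_shift : Tendsto (fun n : ℕ => (1 + (n - m : ℕ) : ℝ)) atTop atTop :=
    tendsto_atTop_add_const_left _ _ <|
      tendsto_natCast_atTop_atTop.comp (tendsto_sub_atTop_nat m)
  refine ((tendsto_log_comp_add_sub_log m).comp h_shift).congr' ?_
  filter_upwards [eventually_ge_atTop m] with n hn
  rw [Function.comp_apply, Nat.cast_sub hn]
  ring_nf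

lemma tendsto_log_one_add_floor_sub_log :
    Tendsto (fun x : ℝ => log (1 + ⌊x⌋₊) - log x) atTop (𝓝 0) := by
  refine squeeze_zero' ?_ ?_ (tendsto_log_comp_add_sub_log 1)
  · filter_upwards [eventually_gt_atTop 0] with x hx
    exact sub_nonneg.2 <| log_le_log hx (by linarith [Nat.lt_floor_add_one x])
  · filter_upwards [eventually_gt_atTop 0] with x hx
    exact sub_le_sub_right (log_le_log (by positivity) (by linarith [Nat.floor_le hx.le])) _

lemma tendsto_add_natCast_mul_two_pi_atTop (c : ℝ) :
    Tendsto (fun k : ℕ => c + k * (2 * π)) atTop atTop :=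
  tendsto_atTop_add_const_left _ _ <| tendsto_natCast_atTop_atTop.atTop_mul_const (by positivity)

lemma tendsto_sin_log_one_add_floor_exp (c : ℝ) :
    Tendsto (fun k : ℕ => sin (log (1 + ⌊exp (c + k * (2 * π))⌋₊))) atTop (𝓝 (sin c)) := by
  have h_log := (tendsto_log_one_add_floor_sub_log.comp
    (tendsto_exp_atTop.comp (tendsto_add_natCast_mul_two_pi_atTop c))).add_const c
  simp only [Function.comp_def, log_exp, zero_add] at h_log
  refine ((continuous_sin.tendsto c).comp h_log).congr fun k => ?_
  simp only [Function.comp_def]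
  exact (congrArg sin (by ring)).trans (sin_periodic.sub_nat_mul_eq k)

lemma not_tendsto_sin_log_one_add (L : ℝ) :
    ¬ Tendsto (fun n : ℕ => sin (log (1 + n))) atTop (𝓝 L) := by
  intro h
  have h_lim (c : ℝ) : L = sin c := by
    have h_idx : Tendsto (fun k : ℕ => ⌊exp (c + k * (2 * π))⌋₊) atTop atTop :=
      tendsto_nat_floor_atTop.comp <| tendsto_exp_atTop.comp <|
        tendsto_add_natCast_mul_two_pi_atTop c
    exact tendsto_nhds_unique (h.comp h_idx) (tendsto_sin_log_one_add_floor_exp c)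
  have h_top := h_lim (π / 2)
  have h_bot := h_lim (-(π / 2))
  rw [sin_neg, sin_pi_div_two] at h_bot
  rw [sin_pi_div_two] at h_top
  linarith

theorem renewal_difference_to_zero_but_no_convergence_general
    (a : ℕ → ℝ)
    (ha_nn : ∀ j : ℕ, 1 ≤ j → 0 ≤ a j)
    (ha_sum : Summable fun j : ℕ => a (j + 1))
    (ha_one : ∑' j : ℕ, a (j + 1) = 1)
    (y : ℕ → ℝ)
    (hy : ∀ n : ℕ, y n = 2 + Real.sin (Real.log (1 + (n : ℝ)))) :
    Filter.Tendsto (fun n : ℕ => y n - ∑ j ∈ Finset.Ico 1 n, a j * y (n - j))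
      Filter.atTop (nhds 0) ∧
    ¬ ∃ L : ℝ, Filter.Tendsto y Filter.atTop (nhds L) := by
  have hy_bdd (n : ℕ) : |y n| ≤ 3 := by
    rw [hy, abs_le]
    constructor <;> linarith [neg_one_le_sin (log (1 + n)), sin_le_one (log (1 + n))]
  have hy_shift (m : ℕ) : Tendsto (fun n => y n - y (n - m)) atTop (𝓝 0) :=
    squeeze_zero_norm (fun n => by simpa [hy] using abs_sin_sub_sin_le _ _)
      (by simpa using (tendsto_log_one_add_sub_log_one_add_sub m).abs)
  refine ⟨tendsto_sub_sum_Ico_mul_of_tendsto_sub_shift ha_nn ha_sum ha_one hy_bdd hy_shift, ?_⟩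
  rintro ⟨L, hL⟩
  refine not_tendsto_sin_log_one_add (L - 2) (hL.sub_const 2 |>.congr fun n => ?_)
  rw [hy]
  ring

/-- Remark 3 of the paper: for `y n = 2 + sin (log (1+n))` and any probability
distribution `(a_j)` on the positive integers with finite mean,
`y n - ∑_{j=1}^{n-1} a_j y_{n-j} → 0`, yet `(y n)` does not converge. -/
theorem renewal_difference_to_zero_but_no_convergence
    (a : ℕ → ℝ)
    (ha_nn : ∀ j : ℕ, 1 ≤ j → 0 ≤ a j)
    (ha_sum : Summable fun j : ℕ => a (j + 1))
    (ha_one : ∑' j : ℕ, a (j + 1) = 1)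
    (ha_mean : Summable fun j : ℕ => ((j : ℝ) + 1) * a (j + 1))
    (y : ℕ → ℝ)
    (hy : ∀ n : ℕ, y n = 2 + Real.sin (Real.log (1 + (n : ℝ)))) :
    Filter.Tendsto (fun n : ℕ => y n - ∑ j ∈ Finset.Ico 1 n, a j * y (n - j))
      Filter.atTop (nhds 0) ∧
    ¬ ∃ L : ℝ, Filter.Tendsto y Filter.atTop (nhds L) :=
  renewal_difference_to_zero_but_no_convergence_general a ha_nn ha_sum ha_one y hy
end

section
/- Let (a_i) be a sequence with a_i ≥ 0 and Σ_{i=1}^∞ a_i < ∞, let x_k = 2 + sin(log(k+1)) for k ≥ 1, and for k ≥ 2 define w_{k,i} = a_i + ( x_k − Σ_{j=1}^{k-1} x_{k-j} a_j ) · ( Σ_{j=1}^{k-1} x_j )^{-1} for 1 ≤ i ≤ k−1. Then sup_{1 ≤ i ≤ k-1} |w_{k,i} − a_i| → 0 as k → ∞, the identity x_k = Σ_{i=1}^{k-1} x_{k-i} w_{k,i} holds for every k ≥ 2, and the sequence (x_k) does not converge. -/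
/-!
The weights are chosen so that the recursion holds exactly: since `∑_{i<k} x_{k-i} = ∑_{j<k} x_j`,
adding the same correction to every `a_i` repairs the defect `x_k - ∑_j x_{k-j} a_j`. That defect
stays bounded (`x` is bounded and `a` summable) while `∑_{j<k} x_j ≥ k - 1`, so the correction
tends to `0`. Yet `x_k - 2 = sin (log (k+1))` has no limit: along `k = ⌊e^t⌋` we have
`log (k+1) - t → 0`, so a limit would also be a limit of `sin t` as `t → ∞`.
-/

open Filter Topology Real Finset

section RenewalWeights

variable {x a : ℕ → ℝ}

theorem sum_Ico_one_mul_eq_of_forall_eq_add_div {k : ℕ} (hS : ∑ j ∈ Ico 1 k, x j ≠ 0)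
    {w : ℕ → ℝ}
    (hw : ∀ i ∈ Ico 1 k, w i = a i + (x k - ∑ j ∈ Ico 1 k, x (k - j) * a j) /
      ∑ j ∈ Ico 1 k, x j) :
    ∑ i ∈ Ico 1 k, x (k - i) * w i = x k := by
  have hreflect : ∑ i ∈ Ico 1 k, x (k - i) = ∑ j ∈ Ico 1 k, x j := by
    simpa using sum_Ico_reflect x 1 (m := k) (n := k) (by omega)
  calc ∑ i ∈ Ico 1 k, x (k - i) * w i
      = ∑ i ∈ Ico 1 k, x (k - i) * a i + (∑ i ∈ Ico 1 k, x (k - i)) *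
          ((x k - ∑ j ∈ Ico 1 k, x (k - j) * a j) / ∑ j ∈ Ico 1 k, x j) := by
        rw [sum_mul, ← sum_add_distrib]
        exact sum_congr rfl fun i hi => by rw [hw i hi]; ring
    _ = x k := by rw [hreflect, mul_div_cancel₀ _ hS]; ring

theorem sub_one_le_sum_Ico_one (h1 : ∀ j, 1 ≤ j → 1 ≤ x j) (k : ℕ) :
    (k : ℝ) - 1 ≤ ∑ j ∈ Ico 1 k, x j := by
  calc (k : ℝ) - 1 ≤ ∑ _j ∈ Ico 1 k, (1 : ℝ) := by
        simpa using (Nat.cast_le (α := ℝ)).mpr (le_tsub_add : k ≤ k - 1 + 1)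
    _ ≤ ∑ j ∈ Ico 1 k, x j := sum_le_sum fun j hj => h1 j (mem_Ico.mp hj).1

theorem sum_Ico_one_pos (h1 : ∀ j, 1 ≤ j → 1 ≤ x j) {k : ℕ} (hk : 2 ≤ k) :
    0 < ∑ j ∈ Ico 1 k, x j := by
  have : (2 : ℝ) ≤ k := by exact_mod_cast hk
  linarith [sub_one_le_sum_Ico_one h1 k]

theorem abs_sub_sum_Ico_one_mul_le {B : ℝ} (hB : ∀ j, 1 ≤ j → |x j| ≤ B)
    (ha : Summable fun i => |a (i + 1)|) {k : ℕ} (hk : 1 ≤ k) :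
    |x k - ∑ j ∈ Ico 1 k, x (k - j) * a j| ≤ B * (1 + ∑' i, |a (i + 1)|) := by
  have hpartial : ∑ j ∈ Ico 1 k, |a j| ≤ ∑' i, |a (i + 1)| := by
    rw [sum_Ico_eq_sum_range]
    simpa only [add_comm 1] using ha.sum_le_tsum _ fun i _ => abs_nonneg _
  have hconv : |∑ j ∈ Ico 1 k, x (k - j) * a j| ≤ B * ∑ j ∈ Ico 1 k, |a j| := by
    rw [mul_sum]
    refine (abs_sum_le_sum_abs _ _).trans (sum_le_sum fun j hj => ?_)
    rw [abs_mul]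
    have := mem_Ico.mp hj
    exact mul_le_mul_of_nonneg_right (hB _ (by omega)) (abs_nonneg _)
  have hB0 : 0 ≤ B := (abs_nonneg _).trans (hB k hk)
  calc |x k - ∑ j ∈ Ico 1 k, x (k - j) * a j|
      ≤ |x k| + |∑ j ∈ Ico 1 k, x (k - j) * a j| := abs_sub _ _
    _ ≤ B * (1 + ∑' i, |a (i + 1)|) := by nlinarith [hB k hk]

theorem tendsto_renewal_defect_div_sum_Ico_one {B : ℝ} (h1 : ∀ j, 1 ≤ j → 1 ≤ x j)
    (hB : ∀ j, 1 ≤ j → |x j| ≤ B) (ha : Summable fun i => |a (i + 1)|) :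
    Tendsto (fun k => (x k - ∑ j ∈ Ico 1 k, x (k - j) * a j) / ∑ j ∈ Ico 1 k, x j)
      atTop (𝓝 0) := by
  have hsum : Tendsto (fun k => ∑ j ∈ Ico 1 k, x j) atTop atTop :=
    tendsto_atTop_mono (sub_one_le_sum_Ico_one h1)
      (tendsto_atTop_add_const_right _ _ tendsto_natCast_atTop_atTop)
  refine squeeze_zero_norm' ?_
    ((tendsto_const_nhds (x := B * (1 + ∑' i, |a (i + 1)|))).div_atTop hsum)
  filter_upwards [eventually_ge_atTop 2] with k hk
  have hpos := sum_Ico_one_pos h1 hk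
  rw [norm_div, Real.norm_of_nonneg hpos.le]
  exact div_le_div_of_nonneg_right (abs_sub_sum_Ico_one_mul_le hB ha (by omega)) hpos.le

end RenewalWeights

theorem Real.not_tendsto_sin_atTop (L : ℝ) : ¬ Tendsto sin atTop (𝓝 L) := by
  intro h
  have hper : Tendsto (fun m : ℕ => m * (2 * π)) atTop atTop :=
    tendsto_natCast_atTop_atTop.atTop_mul_const (by positivity)
  have value_along (c : ℝ) : L = sin c := by
    have hc : Tendsto (fun m : ℕ => sin (c + m * (2 * π))) atTop (𝓝 L) :=
      h.comp (tendsto_atTop_add_const_left _ c hper)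
    simp only [sin_add_nat_mul_two_pi] at hc
    exact tendsto_nhds_unique hc tendsto_const_nhds
  have h1 := value_along (π / 2)
  have h2 := value_along (-(π / 2))
  rw [sin_pi_div_two] at h1
  rw [sin_neg, sin_pi_div_two] at h2
  linarith

theorem tendsto_log_natFloor_exp_add_one_sub :
    Tendsto (fun t : ℝ => log (⌊exp t⌋₊ + 1) - t) atTop (𝓝 0) := by
  have hratio : Tendsto (fun y : ℝ => ((⌊y⌋₊ : ℝ) + 1) / y) atTop (𝓝 1) := by
    simpa [add_div] using (tendsto_nat_floor_div_atTop (R := ℝ)).add tendsto_inv_atTop_zero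
  have hlog := ((continuousAt_log one_ne_zero).tendsto.comp hratio).comp tendsto_exp_atTop
  rw [log_one] at hlog
  refine hlog.congr' ?_
  filter_upwards with t
  simp only [Function.comp_apply]
  rw [log_div (by positivity) (exp_pos t).ne', log_exp]

theorem not_tendsto_sin_log_nat_add_one (L : ℝ) :
    ¬ Tendsto (fun n : ℕ => sin (log (n + 1))) atTop (𝓝 L) := by
  intro h
  have hfloor : Tendsto (fun t : ℝ => sin (log (⌊exp t⌋₊ + 1))) atTop (𝓝 L) :=
    h.comp (tendsto_nat_floor_atTop.comp tendsto_exp_atTop)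
  have hclose : Tendsto (fun t : ℝ => sin t - sin (log (⌊exp t⌋₊ + 1))) atTop (𝓝 0) :=
    squeeze_zero_norm (fun t => (abs_sin_sub_sin_le _ _).trans_eq (abs_sub_comm _ _))
      (by simpa using tendsto_log_natFloor_exp_add_one_sub.abs)
  exact not_tendsto_sin_atTop L (by simpa using hclose.add hfloor)

theorem perturbed_renewal_weights_counterexample_general
    (a : ℕ → ℝ)
    (ha_sum : Summable fun i : ℕ => a (i + 1))
    (x : ℕ → ℝ)
    (hx : ∀ k : ℕ, 1 ≤ k → x k = 2 + Real.sin (Real.log ((k : ℝ) + 1)))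
    (w : ℕ → ℕ → ℝ)
    (hw : ∀ k : ℕ, 2 ≤ k → ∀ i : ℕ,
      w k i = a i + (x k - ∑ j ∈ Finset.Ico 1 k, x (k - j) * a j) /
        (∑ j ∈ Finset.Ico 1 k, x j)) :
    (∀ ε : ℝ, 0 < ε → ∃ K : ℕ, ∀ k : ℕ, K ≤ k → ∀ i ∈ Finset.Ico 1 k, |w k i - a i| < ε) ∧
    (∀ k : ℕ, 2 ≤ k → x k = ∑ i ∈ Finset.Ico 1 k, x (k - i) * w k i) ∧
    ¬ ∃ L : ℝ, Filter.Tendsto x Filter.atTop (nhds L) := by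
  have hx1 : ∀ j, 1 ≤ j → 1 ≤ x j := fun j hj => by
    linarith [hx j hj, neg_one_le_sin (log ((j : ℝ) + 1))]
  have hx3 : ∀ j, 1 ≤ j → |x j| ≤ 3 := fun j hj => abs_le.mpr
    ⟨by linarith [hx1 j hj], by linarith [hx j hj, sin_le_one (log ((j : ℝ) + 1))]⟩
  refine ⟨fun ε hε => ?_, fun k hk => ?_, ?_⟩
  · obtain ⟨K, hK⟩ := Metric.tendsto_atTop.mp
      (tendsto_renewal_defect_div_sum_Ico_one hx1 hx3 ha_sum.abs) ε hε
    refine ⟨max K 2, fun k hk i _ => ?_⟩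
    rw [hw k (le_of_max_le_right hk), add_sub_cancel_left, ← Real.dist_0_eq_abs]
    exact hK k (le_of_max_le_left hk)
  · exact (sum_Ico_one_mul_eq_of_forall_eq_add_div (sum_Ico_one_pos hx1 hk).ne'
      fun i _ => hw k hk i).symm
  · rintro ⟨L, hL⟩
    refine not_tendsto_sin_log_nat_add_one (L - 2) ((hL.sub_const 2).congr' ?_)
    filter_upwards [eventually_ge_atTop 1] with k hk
    rw [hx k hk, add_sub_cancel_left]

/-- Remark 3.5 (Remark `rekmj1`) of the paper: with `x k = 2 + sin (log (k+1))` and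
`w k i = a i + (x k - ∑_{j=1}^{k-1} x_{k-j} a_j) / (∑_{j=1}^{k-1} x_j)`, the
perturbations `w k i - a i` tend to `0` uniformly in `i`, the recursion
`x k = ∑_{i=1}^{k-1} x_{k-i} w k i` holds, yet `(x k)` does not converge. -/
theorem perturbed_renewal_weights_counterexample
    (a : ℕ → ℝ)
    (ha_nn : ∀ i : ℕ, 1 ≤ i → 0 ≤ a i)
    (ha_sum : Summable fun i : ℕ => a (i + 1))
    (x : ℕ → ℝ)
    (hx : ∀ k : ℕ, 1 ≤ k → x k = 2 + Real.sin (Real.log ((k : ℝ) + 1)))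
    (w : ℕ → ℕ → ℝ)
    (hw : ∀ k : ℕ, 2 ≤ k → ∀ i : ℕ,
      w k i = a i + (x k - ∑ j ∈ Finset.Ico 1 k, x (k - j) * a j) /
        (∑ j ∈ Finset.Ico 1 k, x j)) :
    (∀ ε : ℝ, 0 < ε → ∃ K : ℕ, ∀ k : ℕ, K ≤ k → ∀ i ∈ Finset.Ico 1 k, |w k i - a i| < ε) ∧
    (∀ k : ℕ, 2 ≤ k → x k = ∑ i ∈ Finset.Ico 1 k, x (k - i) * w k i) ∧
    ¬ ∃ L : ℝ, Filter.Tendsto x Filter.atTop (nhds L) :=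
  perturbed_renewal_weights_counterexample_general a ha_sum x hx w hw
end

section
/- Let α, β > 0 be real numbers with α/β irrational, and let ε > 0. Then there exists T > 0 such that every real t ≥ T can be written in the form t = mα + nβ + ρ with m, n nonnegative integers and 0 < ρ < ε; equivalently, every t ≥ T lies within distance ε above some element of the set {mα + nβ : m, n ∈ ℕ}. -/
/-!
The additive subgroup generated by `α` and `β` is dense, so it contains some `0 < δ < ε`. Such a
`δ` is a difference `v - u` of two elements of the semigroup `S = ℕα + ℕβ`, which may be taken
positive. For each `n` the points `n u + k δ = (n - k) u + k v`, `k ≤ n`, lie in `S` and cut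
`[n u, n v]` into pieces of length `δ`, and these ranges overlap as soon as `n δ ≥ v`.
-/

open Set

lemma exists_lt_sub_mul_mem_Ioc {δ r : ℝ} {n : ℕ} (hδ : 0 < δ) (hr : r ∈ Ioc 0 (n * δ)) :
    ∃ k < n, r - k * δ ∈ Ioc 0 δ := by
  obtain ⟨hr0, hrn⟩ := hr
  have hrδ : 0 < r / δ := div_pos hr0 hδ
  obtain ⟨k, hk⟩ := Nat.exists_eq_add_one_of_ne_zero (Nat.ceil_pos.2 hrδ).ne'
  have hlt : (k : ℝ) < r / δ := by
    have := Nat.ceil_lt_add_one hrδ.le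
    rw [hk] at this
    push_cast at this
    linarith
  have hle : r / δ ≤ k + 1 := by exact_mod_cast hk ▸ Nat.le_ceil (r / δ)
  have hkn : k + 1 ≤ n := hk ▸ Nat.ceil_le.2 ((div_le_iff₀ hδ).2 hrn)
  rw [lt_div_iff₀ hδ] at hlt
  rw [div_le_iff₀ hδ] at hle
  exact ⟨k, hkn, by linarith, by linarith⟩

lemma exists_nat_mul_lt_le_mul {u v t : ℝ} (hu : 0 < u) (huv : u < v)
    (ht : v ^ 2 / (v - u) ≤ t) : ∃ n : ℕ, n * u < t ∧ t ≤ n * v := by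
  have hv : 0 < v := hu.trans huv
  have hδ : 0 < v - u := sub_pos.2 huv
  have ht0 : 0 ≤ t / v := div_nonneg ((div_nonneg (sq_nonneg v) hδ.le).trans ht) hv.le
  refine ⟨⌈t / v⌉₊, ?_, (div_le_iff₀ hv).1 (Nat.le_ceil _)⟩
  have hn_lt : (⌈t / v⌉₊ : ℝ) * v < t + v := by
    have := Nat.ceil_lt_add_one ht0
    rwa [← lt_div_iff₀ hv, add_div, div_self hv.ne']
  have hn_ge : v ≤ (⌈t / v⌉₊ : ℝ) * (v - u) := by
    have h1 : v / (v - u) ≤ t / v := by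
      rw [div_le_div_iff₀ hδ hv, ← sq]
      exact (div_le_iff₀ hδ).1 ht
    exact (div_le_iff₀ hδ).1 (h1.trans (Nat.le_ceil _))
  linarith

theorem AddSubmonoid.exists_mem_lt_sub_le_of_lt {S : AddSubmonoid ℝ} {u v t : ℝ} (hu : u ∈ S)
    (hv : v ∈ S) (hu0 : 0 < u) (huv : u < v) (ht : v ^ 2 / (v - u) ≤ t) :
    ∃ s ∈ S, s < t ∧ t - s ≤ v - u := by
  obtain ⟨n, hnu, hnv⟩ := exists_nat_mul_lt_le_mul hu0 huv ht
  obtain ⟨k, hkn, hk0, hkδ⟩ := exists_lt_sub_mul_mem_Ioc (r := t - n * u) (sub_pos.2 huv)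
    ⟨by linarith, by linarith⟩
  refine ⟨(n - k) • u + k • v, add_mem (nsmul_mem hu _) (nsmul_mem hv _), ?_, ?_⟩ <;>
  · simp only [nsmul_eq_mul, Nat.cast_sub hkn.le]
    linarith

theorem AddSubgroup.exists_sub_eq_of_mem_closure_pair {G : Type*} [AddCommGroup G] {x y g : G}
    (hg : g ∈ AddSubgroup.closure {x, y}) :
    ∃ u ∈ AddSubmonoid.closure {x, y}, ∃ v ∈ AddSubmonoid.closure {x, y}, v - u = g := by
  obtain ⟨a, b, rfl⟩ := AddSubgroup.mem_closure_pair.1 hg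
  refine ⟨(-a).toNat • x + (-b).toNat • y, (AddSubmonoid.mem_closure_pair _ _ _).2 ⟨_, _, rfl⟩,
    a.toNat • x + b.toNat • y, (AddSubmonoid.mem_closure_pair _ _ _).2 ⟨_, _, rfl⟩, ?_⟩
  conv_rhs => rw [← Int.toNat_sub_toNat_neg a, ← Int.toNat_sub_toNat_neg b]
  simp only [sub_zsmul, natCast_zsmul]
  abel

/-- The arithmetic step in the proof of Lemma 4.1: if `α, β > 0` are
incommensurable (`α/β` irrational) and `ε > 0`, then every sufficiently large
real `t` can be written as `t = mα + nβ + ρ` with `m, n ∈ ℕ` and `0 < ρ < ε`. -/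
theorem incommensurable_semigroup_dense_above
    (α β : ℝ) (hα : 0 < α) (hβ : 0 < β) (hirr : Irrational (α / β))
    (ε : ℝ) (hε : 0 < ε) :
    ∃ T : ℝ, 0 < T ∧ ∀ t : ℝ, T ≤ t →
      ∃ m n : ℕ, ∃ ρ : ℝ, t = (m : ℝ) * α + (n : ℝ) * β + ρ ∧ 0 < ρ ∧ ρ < ε := by
  set S := AddSubmonoid.closure ({α, β} : Set ℝ)
  obtain ⟨δ, hδS, hδ0, hδε⟩ := (dense_addSubgroupClosure_pair_iff.2 hirr).exists_mem_open
    isOpen_Ioo (nonempty_Ioo.2 hε)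
  obtain ⟨u, huS, v, hvS, rfl⟩ := AddSubgroup.exists_sub_eq_of_mem_closure_pair hδS
  have hαS : α ∈ S := AddSubmonoid.subset_closure (by simp)
  have hu0 : 0 ≤ u := by
    obtain ⟨m, n, rfl⟩ := (AddSubmonoid.mem_closure_pair _ _ _).1 huS
    positivity
  refine ⟨(v + α) ^ 2 / (v - u), div_pos (by nlinarith) hδ0, fun t ht => ?_⟩
  obtain ⟨s, hsS, hst, hts⟩ := AddSubmonoid.exists_mem_lt_sub_le_of_lt (t := t)
    (add_mem huS hαS) (add_mem hvS hαS) (by linarith) (by linarith)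
    (by rwa [add_sub_add_right_eq_sub])
  obtain ⟨m, n, rfl⟩ := (AddSubmonoid.mem_closure_pair _ _ _).1 hsS
  refine ⟨m, n, t - (m • α + n • β), by simp only [nsmul_eq_mul]; ring, by linarith, ?_⟩
  linarith
end
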